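/- arXiv:1811.08505 — 4 statements merged into one kernel-verified Lean document; each statement's English description precedes it below -/
import Mathlib

section
/- Fix d ≥ 3 and order the facets τ_0, τ_1^1, …, τ_1^d, τ_2^1, …, τ_2^d, … of ∂C_d^* first by increasing j and, within a fixed j, by increasing k ∈ {1,…,d}. Then for every j with 1 ≤ j and 2j ≤ d+1 and every k ∈ {1,…,d}, a face G ⊆ τ_j^k is contained in some facet occurring strictly earlier in this order if and only if G does not contain the restriction face r(τ_j^k), where r(τ_1^k) = {y_k} and r(τ_j^k) = {y_k, y_{k+j−1}} for j ≥ 2. -/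
/-!
A face `G ⊆ τ_j^k` missing `y_{k+j-1}` lies in `τ_{j-1}^k`, and one missing `y_k` lies in
`τ_{j-1}^{k+1}`; both facets come earlier (for `j = 1` both are `τ_0`). Conversely, the `y`'s of
an earlier facet `τ_{j'}^{k'}` form a cyclic block of length `j' ≤ j`. Because `2j ≤ d + 1`, such a
block contains both `y_k` and `y_{k+j-1}` only if it has length `j` and starts at `y_k`, that is,
only if `τ_{j'}^{k'} = τ_j^k`.
-/

namespace SpherePaper

/-- Vertices of `∂C_d^*`: `(i, false)` plays the role of `x_i` and `(i, true)` of `y_i`,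
with the cyclic index convention `x_{d+k} = x_k` built in via `ZMod d`. -/
abbrev Vtx (d : ℕ) := ZMod d × Bool

/-- The vertex `x_k`. -/
def xv (d k : ℕ) : Vtx d := ((k : ZMod d), false)

/-- The vertex `y_k`. -/
def yv (d k : ℕ) : Vtx d := ((k : ZMod d), true)

/-- The antipodal map `α`, sending `x_k ↦ y_k` and `y_k ↦ x_k`. -/
def alphaV (d : ℕ) (v : Vtx d) : Vtx d := (v.1, !v.2)

/-- The facet `τ_j^k = {y_k, …, y_{k+j-1}} ∪ {x_{k+j}, …, x_{k+d-1}}` of `∂C_d^*`. -/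
def tau (d j k : ℕ) : Finset (Vtx d) :=
  (Finset.range d).image fun t => (((k + t : ℕ) : ZMod d), decide (t < j))

/-- The complex `Γ_j` generated by the facets `τ_j^k`, `1 ≤ k ≤ d`. -/
def Gamma (d j : ℕ) : Set (Finset (Vtx d)) :=
  {F | ∃ k, 1 ≤ k ∧ k ≤ d ∧ F ⊆ tau d j k}

/-- The `n`-th facet `σ_n` of `B(1,d)` (indices read periodically mod `2d`):
`σ_i = {x_1,…,x_i, y_{i+1},…,y_d}` and `σ_{d+i} = {y_1,…,y_i, x_{i+1},…,x_d}`
for `1 ≤ i ≤ d`. -/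
def sigB (d n : ℕ) : Finset (Vtx d) :=
  if (n - 1) % (2 * d) + 1 ≤ d then
    (Finset.range d).image fun t =>
      (((t + 1 : ℕ) : ZMod d), decide ((n - 1) % (2 * d) + 1 < t + 1))
  else
    (Finset.range d).image fun t =>
      (((t + 1 : ℕ) : ZMod d), decide (t + 1 ≤ (n - 1) % (2 * d) + 1 - d))

/-- `F` is a facet (an inclusion-maximal face) of the complex `C`. -/
def IsFacetOf {α : Type*} (C : Set (Finset α)) (F : Finset α) : Prop :=
  F ∈ C ∧ ∀ G ∈ C, F ⊆ G → F = G

theorem _root_.ZMod.natCast_ne_natCast_of_lt {d a b : ℕ} (ha : 0 < a) (hab : a < b) (hb : b ≤ d) :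
    (a : ZMod d) ≠ b := fun h =>
  have hdvd : d ∣ b - a := (Nat.modEq_iff_dvd' hab.le).mp ((ZMod.natCast_eq_natCast_iff _ _ _).mp h)
  absurd (Nat.le_of_dvd (by omega) hdvd) (by omega)

section Facets

variable {d : ℕ}

theorem tau_congr {j k k' : ℕ} (h : (k : ZMod d) = k') : tau d j k = tau d j k' := by
  simp only [tau, Nat.cast_add, h]

theorem yv_mem_tau_iff {j k n : ℕ} :
    yv d n ∈ tau d j k ↔ ∃ t < j, t < d ∧ ((k + t : ℕ) : ZMod d) = n := by
  simp only [tau, yv, Finset.mem_image, Finset.mem_range, Prod.mk.injEq, decide_eq_true_eq]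
  grind

theorem mem_tau_zero_iff [NeZero d] {k : ℕ} {v : Vtx d} : v ∈ tau d 0 k ↔ v.2 = false := by
  obtain ⟨c, b⟩ := v
  simp only [tau, Finset.mem_image, Finset.mem_range, Prod.mk.injEq, Nat.not_lt_zero,
    decide_false]
  refine ⟨fun ⟨_, _, _, hb⟩ => hb.symm, fun hb => ⟨(c - k).val, ZMod.val_lt _, ?_, hb.symm⟩⟩
  rw [Nat.cast_add, ZMod.natCast_zmod_val, add_sub_cancel]

theorem mem_Gamma_of_subset_tau [NeZero d] {G : Finset (Vtx d)} {j n : ℕ}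
    (h : G ⊆ tau d j n) : G ∈ Gamma d j := by
  have hd : 0 < d := Nat.pos_of_neZero d
  refine ⟨(n + d - 1) % d + 1, by omega, Nat.mod_lt _ hd, h.trans (tau_congr ?_).le⟩
  rw [Nat.cast_succ, ZMod.natCast_mod, ← Nat.cast_succ, show (n + d - 1).succ = n + d by omega,
    Nat.cast_add, ZMod.natCast_self, add_zero]

theorem tau_succ_erase_yv_last_subset (m k : ℕ) :
    (tau d (m + 1) k).erase (yv d (k + m)) ⊆ tau d m k := by
  intro v hv
  obtain ⟨hne, hv⟩ := Finset.mem_erase.1 hv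
  obtain ⟨t, ht, rfl⟩ := Finset.mem_image.1 hv
  have htm : t ≠ m := by
    rintro rfl
    exact hne (by simp [yv])
  exact Finset.mem_image.2 ⟨t, ht, Prod.ext rfl (decide_eq_decide.2 (by omega))⟩

theorem tau_succ_erase_yv_first_subset (m k : ℕ) :
    (tau d (m + 1) k).erase (yv d k) ⊆ tau d m (k + 1) := by
  intro v hv
  obtain ⟨hne, hv⟩ := Finset.mem_erase.1 hv
  obtain ⟨t, ht, rfl⟩ := Finset.mem_image.1 hv
  obtain ⟨s, rfl⟩ : ∃ s, t = s + 1 := by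
    refine Nat.exists_eq_add_one.2 (Nat.pos_of_ne_zero ?_)
    rintro rfl
    exact hne (by simp [yv])
  refine Finset.mem_image.2 ⟨s, by simp only [Finset.mem_range] at ht ⊢; omega, ?_⟩
  exact Prod.ext (by rw [Nat.add_right_comm, add_assoc]) (decide_eq_decide.2 (by omega))

theorem exists_add_lt_of_yv_mem_tau {j k n m : ℕ} (hjm : j + m ≤ d)
    (h₁ : yv d n ∈ tau d j k) (h₂ : yv d (n + m) ∈ tau d j k) :
    ∃ s, s + m < j ∧ ((k + s : ℕ) : ZMod d) = n := by
  obtain ⟨s, hsj, -, hs⟩ := yv_mem_tau_iff.1 h₁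
  obtain ⟨t, htj, htd, ht⟩ := yv_mem_tau_iff.1 h₂
  have hcast : ((s + m : ℕ) : ZMod d) = t := by
    push_cast at hs ht ⊢
    linear_combination hs - ht
  have : s + m = t := by
    simpa only [ZMod.val_cast_of_lt (show s + m < d by omega), ZMod.val_cast_of_lt htd]
      using congrArg ZMod.val hcast
  exact ⟨s, by omega, hs⟩

theorem restriction_subset_iff {G : Finset (Vtx d)} {k m : ℕ} :
    ((if m + 1 = 1 then {yv d k} else {yv d k, yv d (k + (m + 1) - 1)}) ⊆ G) ↔
      yv d k ∈ G ∧ yv d (k + m) ∈ G := by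
  rw [show k + (m + 1) - 1 = k + m by omega]
  split_ifs with hm
  · obtain rfl : m = 0 := by omega
    simp
  · simp [Finset.insert_subset_iff]

end Facets

theorem statement0_general (d : ℕ) (j k : ℕ)
    (hj : 1 ≤ j) (hjd : 2 * j ≤ d + 1) (hkd : k ≤ d)
    (G : Finset (Vtx d)) (hG : G ⊆ tau d j k) :
    (G ⊆ tau d 0 1 ∨
        (∃ j' k', 1 ≤ j' ∧ j' < j ∧ 1 ≤ k' ∧ k' ≤ d ∧ G ⊆ tau d j' k') ∨
        (∃ k', 1 ≤ k' ∧ k' < k ∧ G ⊆ tau d j k')) ↔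
      ¬ ((if j = 1 then ({yv d k} : Finset (Vtx d)) else {yv d k, yv d (k + j - 1)}) ⊆ G) := by
  have : NeZero d := ⟨by omega⟩
  obtain ⟨m, rfl⟩ : ∃ m, j = m + 1 := ⟨j - 1, by omega⟩
  rw [restriction_subset_iff]
  constructor
  · rintro (h | ⟨j', _, -, hj'm, -, -, h⟩ | ⟨k', hk', hk'k, h⟩) ⟨hyk, hykm⟩
    · obtain ⟨t, ht, -⟩ := yv_mem_tau_iff.1 (h hyk)
      omega
    · obtain ⟨s, hs, -⟩ := exists_add_lt_of_yv_mem_tau (by omega) (h hyk) (h hykm)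
      omega
    · obtain ⟨s, hs, hks⟩ := exists_add_lt_of_yv_mem_tau (by omega) (h hyk) (h hykm)
      obtain rfl : s = 0 := by omega
      exact ZMod.natCast_ne_natCast_of_lt hk' hk'k hkd hks
  · intro hr
    obtain ⟨n, hGn⟩ : ∃ n, G ⊆ tau d m n := by
      rcases not_and_or.1 hr with hyk | hykm
      · exact ⟨k + 1,
          (Finset.subset_erase.2 ⟨hG, hyk⟩).trans (tau_succ_erase_yv_first_subset m k)⟩
      · exact ⟨k, (Finset.subset_erase.2 ⟨hG, hykm⟩).trans (tau_succ_erase_yv_last_subset m k)⟩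
    rcases Nat.eq_zero_or_pos m with rfl | hm
    · exact Or.inl fun v hv => mem_tau_zero_iff.2 (mem_tau_zero_iff.1 (hGn hv))
    · obtain ⟨k', hk', hk'd, hGk'⟩ := mem_Gamma_of_subset_tau hGn
      exact Or.inr (Or.inl ⟨m, k', hm, by omega, hk', hk'd, hGk'⟩)

/-- In the ordering of the facets of `∂C_d^*` with at most given number of
switches, first by increasing `j`, then by increasing `k ∈ {1,…,d}`, a face `G ⊆ τ_j^k`
(for `1 ≤ j`, `2j ≤ d+1`, `1 ≤ k ≤ d`) is contained in a strictly earlier facet if and only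
if `G` does not contain the restriction face `r(τ_j^k)`, where `r(τ_1^k) = {y_k}` and
`r(τ_j^k) = {y_k, y_{k+j-1}}` for `j ≥ 2`. -/
theorem statement0 (d : ℕ) (hd : 3 ≤ d) (j k : ℕ)
    (hj : 1 ≤ j) (hjd : 2 * j ≤ d + 1) (hk1 : 1 ≤ k) (hkd : k ≤ d)
    (G : Finset (Vtx d)) (hG : G ⊆ tau d j k) :
    (G ⊆ tau d 0 1 ∨
        (∃ j' k', 1 ≤ j' ∧ j' < j ∧ 1 ≤ k' ∧ k' ≤ d ∧ G ⊆ tau d j' k') ∨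
        (∃ k', 1 ≤ k' ∧ k' < k ∧ G ⊆ tau d j k')) ↔
      ¬ ((if j = 1 then ({yv d k} : Finset (Vtx d)) else {yv d k, yv d (k + j - 1)}) ⊆ G) :=
  statement0_general d j k hj hjd hkd G hG

end SpherePaper
end

section
/- Let d ≥ 2 and let σ_1, σ_2, …, σ_{2d} be facets of ∂C_d^*, with indices read modulo 2d, such that |σ_i ∩ σ_{i+1}| = d−1 for all i and σ_{i+d} = α(σ_i) for all i. Then: (1) there is an enumeration u_1, …, u_d of the d vertices of σ_1 such that σ_{i+1} = (σ_i \ {u_i}) ∪ {α(u_i)} for every 1 ≤ i ≤ d; (2) the facets σ_1, …, σ_{2d} are pairwise distinct; and (3) there exists a bijection φ : V_d → V_d with φ ∘ α = α ∘ φ that maps the 2d facets of B(1,d) bijectively onto {σ_1, …, σ_{2d}}, so the complex generated by σ_1, …, σ_{2d} is simplicially isomorphic to B(1,d). -/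
/-!
A facet of `∂C_d^*` is a sign vector `ZMod d → Bool`. Consecutive facets `σ_i, σ_{i+1}` differ
in exactly one coordinate `c i`, and `σ_{i+d} = α(σ_i)` means that every coordinate flips an odd
number of times during any `d` consecutive steps. As there are only `d` steps, each coordinate
flips exactly once, i.e. `c` enumerates the coordinates on every window of length `d`; this gives
(1) and (2), and makes `c` `d`-periodic. `B(1,d)` is such a cycle flipping the coordinates in the
order `2, 3, …, d, 1`, so matching the two flip orders and swapping `x_r ↔ y_r` where the two
initial facets disagree carries the facets of `B(1,d)` onto the `σ_i`.
-/

namespace SpherePaper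

open Finset Function

section SignFacet

variable {ι : Type*} [Fintype ι] [DecidableEq ι]

def signFacet (f : ι → Bool) : Finset (ι × Bool) :=
  univ.image fun r => (r, f r)

@[simp]
theorem mem_signFacet {f : ι → Bool} {r : ι} {b : Bool} :
    (r, b) ∈ signFacet f ↔ f r = b := by
  simp [signFacet]

theorem signFacet_injective : Injective (signFacet (ι := ι)) := fun f g h =>
  funext fun r => (mem_signFacet.mp (h ▸ mem_signFacet.mpr rfl : (r, f r) ∈ signFacet g)).symm

theorem card_signFacet (f : ι → Bool) : #(signFacet f) = Fintype.card ι :=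
  card_image_of_injective _ fun _ _ h => (Prod.mk.inj h).1

theorem eq_signFacet {s : Finset (ι × Bool)}
    (hface : ∀ r, ¬((r, false) ∈ s ∧ (r, true) ∈ s)) (hcard : #s = Fintype.card ι) :
    s = signFacet fun r => decide ((r, true) ∈ s) := by
  refine eq_of_subset_of_card_le (fun ⟨r, b⟩ hrb => ?_) (by rw [card_signFacet, hcard])
  cases b
  · simpa using fun ht => hface r ⟨hrb, ht⟩
  · simpa using hrb

theorem card_signFacet_inter (f g : ι → Bool) :
    #(signFacet f ∩ signFacet g) = #{r | f r = g r} := by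
  have : signFacet f ∩ signFacet g = ({r | f r = g r} : Finset ι).image fun r => (r, f r) := by
    ext ⟨r, b⟩
    simp only [mem_inter, mem_signFacet, mem_image, mem_filter, mem_univ, true_and,
      Prod.mk.injEq]
    constructor
    · rintro ⟨rfl, hg⟩
      exact ⟨r, hg.symm, rfl, rfl⟩
    · rintro ⟨r, hfg, rfl, rfl⟩
      exact ⟨rfl, hfg.symm⟩
  rw [this, card_image_of_injective _ fun _ _ h => (Prod.mk.inj h).1]

theorem exists_eq_update_of_card_inter [Nonempty ι] {f g : ι → Bool}
    (h : #(signFacet f ∩ signFacet g) = Fintype.card ι - 1) : ∃ a, g = update f a (!f a) := by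
  have hne : #{r | ¬f r = g r} = 1 := by
    have := card_filter_add_card_filter_not (s := univ) fun r => f r = g r
    rw [← card_signFacet_inter, h, card_univ] at this
    have := Fintype.card_pos (α := ι)
    omega
  obtain ⟨a, ha⟩ := card_eq_one.mp hne
  have hdiff : ∀ r, f r ≠ g r ↔ r = a := fun r => by
    simpa using congrArg (r ∈ ·) ha
  refine ⟨a, funext fun r => ?_⟩
  by_cases hr : r = a
  · subst hr
    simpa [eq_comm, Bool.eq_not_iff] using (hdiff r).mpr rfl
  · rw [update_of_ne hr]
    exact (not_not.mp (mt (hdiff r).mp hr)).symm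

theorem signFacet_update_not (f : ι → Bool) (a : ι) :
    signFacet (update f a (!f a)) = insert (a, !f a) ((signFacet f).erase (a, f a)) := by
  ext ⟨r, b⟩
  by_cases hr : r = a
  · subst hr
    cases b <;> cases f r <;> simp
  · simp [hr]

theorem image_antipode_signFacet (f : ι → Bool) :
    (signFacet f).image (fun v => (v.1, !v.2)) = signFacet fun r => !f r := by
  simp only [signFacet, image_image, comp_def]

end SignFacet

section Twist

variable {ι κ : Type*}

-- The automorphisms of `∂C^*` commuting with the antipodal map.
def twist (p : κ ≃ ι) (t : κ → Bool) : κ × Bool ≃ ι × Bool where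
  toFun v := (p v.1, v.2 ^^ t v.1)
  invFun w := (p.symm w.1, w.2 ^^ t (p.symm w.1))
  left_inv v := by simp
  right_inv w := by simp

theorem twist_antipode (p : κ ≃ ι) (t : κ → Bool) (v : κ × Bool) :
    twist p t (v.1, !v.2) = ((twist p t v).1, !(twist p t v).2) := by
  simp [twist]

theorem image_twist_signFacet [Fintype ι] [DecidableEq ι] [Fintype κ] [DecidableEq κ]
    (p : κ ≃ ι) (t : κ → Bool) {f : ι → Bool} {g : κ → Bool} (h : ∀ r, f (p r) = (g r ^^ t r)) :
    (signFacet g).image (twist p t) = signFacet f := by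
  ext ⟨s, b⟩
  simp only [signFacet, image_image, mem_image, mem_univ, true_and, comp_apply, twist,
    Equiv.coe_fn_mk, Prod.mk.injEq]
  constructor
  · rintro ⟨r, rfl, rfl⟩
    exact ⟨p r, rfl, h r⟩
  · rintro ⟨s, rfl, rfl⟩
    exact ⟨p.symm s, by simp, by rw [← h, Equiv.apply_symm_apply]⟩

end Twist

section FlipSequence

variable {ι : Type*} [DecidableEq ι] {F : ℕ → ι → Bool} {c : ℕ → ι}

theorem sign_add_eq_iff_even_card (hstep : ∀ i, F (i + 1) = update (F i) (c i) (!F i (c i)))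
    (i k : ℕ) (r : ι) : F (i + k) r = F i r ↔ Even #{j ∈ Ico i (i + k) | c j = r} := by
  induction k with
  | zero => simp
  | succ k ih =>
    rw [← add_assoc, Nat.Ico_succ_right_eq_insert_Ico (by omega), filter_insert, hstep]
    by_cases h : c (i + k) = r
    · subst h
      rw [if_pos rfl, card_insert_of_notMem (by simp), update_self, Nat.even_add_one, ← ih]
      cases F (i + k) (c (i + k)) <;> cases F i (c (i + k)) <;> simp
    · rw [if_neg h, update_of_ne (Ne.symm h), ih]

-- Walks whose flipped coordinates correspond under `p` stay a fixed `twist` apart.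
theorem xor_sign_eq {κ : Type*} [DecidableEq κ] {G : ℕ → κ → Bool} {b : ℕ → κ}
    (p : κ ≃ ι) {m N : ℕ} (hstep : ∀ i, F (i + 1) = update (F i) (c i) (!F i (c i)))
    (hG : ∀ n, m ≤ n → n < N → G (n + 1) = update (G n) (b n) (!G n (b n)))
    (hp : ∀ n, p (b n) = c n) {n : ℕ} (h1 : m ≤ n) (h2 : n ≤ N) (r : κ) :
    (G n r ^^ F n (p r)) = (G m r ^^ F m (p r)) := by
  induction n, h1 using Nat.le_induction with
  | base => rfl
  | succ n hmn ih =>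
    rw [← ih (by omega), hG n hmn (by omega), hstep]
    by_cases hr : r = b n
    · subst hr
      rw [hp, update_self, update_self, Bool.not_xor_not]
    · rw [update_of_ne hr, update_of_ne (by rwa [← hp, p.injective.ne_iff])]

variable [Fintype ι]

-- `F i` is the sign vector of the facet `σ_i`, and `c i` the coordinate flipped from `σ_i` to
-- `σ_{i+1}`.
structure IsAntipodalFlipCycle (F : ℕ → ι → Bool) (c : ℕ → ι) : Prop where
  step : ∀ i, F (i + 1) = update (F i) (c i) (!F i (c i))
  antipodal : ∀ i, F (i + Fintype.card ι) = fun r => !F i r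

namespace IsAntipodalFlipCycle

theorem card_filter_window_eq_one (h : IsAntipodalFlipCycle F c) (i : ℕ) (r : ι) :
    #{j ∈ Ico i (i + Fintype.card ι) | c j = r} = 1 := by
  -- every coordinate flips an odd number of times, and there are only `card ι` flips in all
  have hpos : ∀ s, 0 < #{j ∈ Ico i (i + Fintype.card ι) | c j = s} := fun s => by
    rw [Nat.pos_iff_ne_zero]
    intro h0
    have := (sign_add_eq_iff_even_card h.step i _ s).mpr (by rw [h0]; exact Even.zero)
    simp [h.antipodal] at this
  have hsum : ∑ s, #{j ∈ Ico i (i + Fintype.card ι) | c j = s} = Fintype.card ι := by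
    rw [← card_eq_sum_card_fiberwise fun j _ => mem_univ (c j)]
    simp
  by_contra hne
  have : ∑ _s : ι, 1 < ∑ s, #{j ∈ Ico i (i + Fintype.card ι) | c j = s} :=
    sum_lt_sum (fun s _ => hpos s) ⟨r, mem_univ r, by have := hpos r; omega⟩
  simp [hsum] at this

theorem injOn_flip_window (h : IsAntipodalFlipCycle F c) (i : ℕ) :
    Set.InjOn c (Set.Ico i (i + Fintype.card ι)) := by
  intro j hj j' hj' hcc
  by_contra hne
  have hsub : ({j, j'} : Finset ℕ) ⊆ {t ∈ Ico i (i + Fintype.card ι) | c t = c j'} := by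
    intro x hx
    simp only [mem_insert, mem_singleton] at hx
    rcases hx with rfl | rfl <;> simp_all
  have := card_le_card hsub
  rw [h.card_filter_window_eq_one, card_pair hne] at this
  omega

theorem periodic_flip (h : IsAntipodalFlipCycle F c) :
    Periodic c (Fintype.card ι) := by
  intro i
  by_contra hne
  have := congrFun (h.antipodal (i + 1)) (c i)
  rw [add_right_comm, h.step, h.step, h.antipodal, update_of_ne (Ne.symm hne), update_self] at this
  simp at this

theorem sign_flip_eq_of_mem_window (h : IsAntipodalFlipCycle F c) {m i : ℕ} (h1 : m ≤ i)
    (h2 : i < m + Fintype.card ι) : F i (c i) = F m (c i) := by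
  have hnone : {j ∈ Ico m i | c j = c i} = ∅ := by
    refine filter_eq_empty_iff.mpr fun j hj hcc => ?_
    rw [mem_Ico] at hj
    have := h.injOn_flip_window m (by simp only [Set.mem_Ico]; omega)
      (by simp only [Set.mem_Ico]; omega) hcc
    omega
  have := (sign_add_eq_iff_even_card h.step m (i - m) (c i)).mpr
  rw [Nat.add_sub_cancel' h1, hnone] at this
  exact this (by simp)

theorem image_window_eq_signFacet (h : IsAntipodalFlipCycle F c) (m : ℕ) :
    (Ico m (m + Fintype.card ι)).image (fun i => (c i, F i (c i))) = signFacet (F m) := by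
  have hinj : Set.InjOn (fun i => (c i, F i (c i))) (Set.Ico m (m + Fintype.card ι)) :=
    fun j hj j' hj' hjj' => h.injOn_flip_window m hj hj' (Prod.mk.inj hjj').1
  refine eq_of_subset_of_card_le (fun v hv => ?_) ?_
  · obtain ⟨i, hi, rfl⟩ := mem_image.mp hv
    rw [mem_Ico] at hi
    exact mem_signFacet.mpr (h.sign_flip_eq_of_mem_window hi.1 hi.2).symm
  · rw [card_signFacet, card_image_of_injOn (by simpa using hinj), Nat.card_Ico]
    omega

theorem sign_add_ne_of_lt (h : IsAntipodalFlipCycle F c) {i k : ℕ} (h0 : 0 < k)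
    (hk : k < Fintype.card ι) : F (i + k) ≠ F i := by
  intro heq
  have hflip : {j ∈ Ico i (i + k) | c j = c i} = {i} := by
    ext j
    simp only [mem_filter, mem_Ico, mem_singleton]
    constructor
    · rintro ⟨hj, hcc⟩
      exact h.injOn_flip_window i (by simp only [Set.mem_Ico]; omega)
        (by simp only [Set.mem_Ico]; omega) hcc
    · rintro rfl
      exact ⟨⟨le_rfl, by omega⟩, rfl⟩
  have := (sign_add_eq_iff_even_card h.step i k (c i)).mp (congrFun heq (c i))
  simp [hflip] at this

theorem sign_add_ne_of_lt_two_mul (h : IsAntipodalFlipCycle F c) {i k : ℕ} (h0 : 0 < k)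
    (hk : k < 2 * Fintype.card ι) : F (i + k) ≠ F i := by
  set d := Fintype.card ι
  rcases lt_trichotomy k d with hlt | rfl | hgt
  · exact h.sign_add_ne_of_lt h0 hlt
  · have : Nonempty ι := Fintype.card_pos_iff.mp h0
    intro heq
    have := congrFun (heq ▸ h.antipodal i) (Classical.arbitrary ι)
    simp at this
  · -- `F (i + k)` is antipodal to `F (i + (k - d))`, which is `2d - k` steps before `F (i + d)`
    intro heq
    have key := h.sign_add_ne_of_lt (i := i + (k - d)) (k := 2 * d - k) (by omega) (by omega)
    rw [show i + (k - d) + (2 * d - k) = i + d by omega, h.antipodal, ← heq,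
      show i + k = i + (k - d) + d by omega, h.antipodal] at key
    simp at key

theorem injOn_sign_window_two_mul (h : IsAntipodalFlipCycle F c) (m : ℕ) :
    Set.InjOn F (Set.Ico m (m + 2 * Fintype.card ι)) := by
  intro i hi j hj hij
  simp only [Set.mem_Ico] at hi hj
  by_contra hne
  rcases lt_or_gt_of_ne hne with hlt | hgt
  · refine h.sign_add_ne_of_lt_two_mul (i := i) (k := j - i) (by omega) (by omega) ?_
    rw [Nat.add_sub_cancel' hlt.le, hij]
  · refine h.sign_add_ne_of_lt_two_mul (i := j) (k := i - j) (by omega) (by omega) ?_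
    rw [Nat.add_sub_cancel' hgt.le, hij]

end IsAntipodalFlipCycle

end FlipSequence

section CrossPolytope

variable {d : ℕ} [NeZero d]

theorem exists_equiv_zmod_of_injOn {ι : Type*} [Fintype ι] {c : ℕ → ι}
    (hcard : Fintype.card ι = d) (hper : Periodic c d) (hinj : Set.InjOn c (Set.Ico 0 d)) :
    ∃ q : ZMod d ≃ ι, ∀ n : ℕ, q n = c n := by
  have hqinj : Injective fun r : ZMod d => c r.val := fun a b h =>
    ZMod.val_injective d (hinj (by simp [ZMod.val_lt]) (by simp [ZMod.val_lt]) h)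
  have hqbij := (Fintype.bijective_iff_injective_and_card _).mpr ⟨hqinj, by simp [hcard]⟩
  exact ⟨Equiv.ofBijective _ hqbij, fun n => by simp [ZMod.val_natCast, hper.map_mod_nat]⟩

-- Coordinate `r` carries the label `(r - 1).val + 1 ∈ [1, d]`, the label `sigB` gives it.
variable (d) in
def bSign (n : ℕ) (r : ZMod d) : Bool :=
  if n ≤ d then decide (n < (r - 1).val + 1) else decide ((r - 1).val + 1 ≤ n - d)

theorem sigB_eq_signFacet {n : ℕ} (h1 : 1 ≤ n) (h2 : n ≤ 2 * d) :
    sigB d n = signFacet (bSign d n) := by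
  have hmod : (n - 1) % (2 * d) + 1 = n := by
    rw [Nat.mod_eq_of_lt (by omega)]
    omega
  have huniv : (range d).image (fun t => ((t + 1 : ℕ) : ZMod d)) = univ :=
    eq_univ_of_forall fun r => mem_image.mpr
      ⟨(r - 1).val, mem_range.mpr (ZMod.val_lt _), by push_cast; simp⟩
  rw [signFacet, ← huniv, image_image, sigB, hmod]
  split_ifs with h <;> refine image_congr fun t ht => ?_ <;>
    rw [mem_coe, mem_range] at ht <;> simp [bSign, h, Nat.mod_eq_of_lt ht]

theorem bSign_succ {n : ℕ} (hn : n < 2 * d) :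
    bSign d (n + 1) =
      update (bSign d n) ((n + 1 : ℕ) : ZMod d) (!bSign d n ((n + 1 : ℕ) : ZMod d)) := by
  funext r
  have hr : r = ((n + 1 : ℕ) : ZMod d) ↔ (r - 1).val = n % d := by
    rw [← ZMod.val_natCast, (ZMod.val_injective d).eq_iff, Nat.cast_succ, sub_eq_iff_eq_add]
  have hlt := ZMod.val_lt (r - 1)
  have hmod : n % d = if n < d then n else n - d := by
    split_ifs with h
    · exact Nat.mod_eq_of_lt h
    · rw [Nat.mod_eq_sub_mod (by omega), Nat.mod_eq_of_lt (by omega)]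
  rw [hmod] at hr
  by_cases hrn : r = ((n + 1 : ℕ) : ZMod d)
  · have := hr.mp hrn
    clear hr hmod
    rw [update_apply, if_pos hrn, ← hrn]
    simp only [bSign]
    split_ifs at * <;> simp only [← decide_not, decide_eq_decide] <;> omega
  · have := mt hr.mpr hrn
    clear hr hmod
    rw [update_of_ne hrn]
    simp only [bSign]
    split_ifs at * <;> simp only [decide_eq_decide] <;> omega

theorem exists_equiv_image_sigB {F : ℕ → ZMod d → Bool} {c : ℕ → ZMod d}
    (h : IsAntipodalFlipCycle F c) :
    ∃ φ : Vtx d ≃ Vtx d, φ ∘ alphaV d = alphaV d ∘ φ ∧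
      ∀ n, 1 ≤ n → n ≤ 2 * d → (sigB d n).image φ = signFacet (F n) := by
  obtain ⟨q, hq⟩ := exists_equiv_zmod_of_injOn (ZMod.card d) (ZMod.card d ▸ h.periodic_flip)
    (by simpa using h.injOn_flip_window 0)
  -- `B(1,d)` flips the coordinate `n + 1` at step `n`, the given cycle flips `c n`
  set p := (Equiv.subRight (1 : ZMod d)).trans q
  have hp : ∀ n : ℕ, p ((n + 1 : ℕ) : ZMod d) = c n := fun n => by simp [p, ← hq]
  set t := fun r => bSign d 1 r ^^ F 1 (p r)
  refine ⟨twist p t, funext fun v => twist_antipode p t v, fun n h1 h2 => ?_⟩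
  rw [sigB_eq_signFacet h1 h2]
  refine image_twist_signFacet p t fun r => ?_
  have := xor_sign_eq p h.step (fun n _ hn => bSign_succ hn) hp h1 h2 r
  simp only [t, ← this, ← Bool.xor_assoc, Bool.xor_self, Bool.false_xor]

end CrossPolytope

theorem statement3_general (d : ℕ) (hd : 2 ≤ d)
    (σ : ℕ → Finset (Vtx d))
    (hfacet : ∀ i, (∀ r : ZMod d, ¬ (((r, false) ∈ σ i) ∧ ((r, true) ∈ σ i))) ∧
      (σ i).card = d)
    (hadj : ∀ i, (σ i ∩ σ (i + 1)).card = d - 1)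
    (hanti : ∀ i, σ (i + d) = (σ i).image (alphaV d)) :
    (∃ u : ℕ → Vtx d,
      ((Finset.Icc 1 d).image u = σ 1) ∧
      (∀ a ∈ Finset.Icc 1 d, ∀ b ∈ Finset.Icc 1 d, u a = u b → a = b) ∧
      (∀ i, 1 ≤ i → i ≤ d →
        σ (i + 1) = insert (alphaV d (u i)) ((σ i).erase (u i)))) ∧
    (∀ i j, 1 ≤ i → i ≤ 2 * d → 1 ≤ j → j ≤ 2 * d → σ i = σ j → i = j) ∧
    (∃ φ : Vtx d → Vtx d, Function.Bijective φ ∧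
      φ ∘ alphaV d = alphaV d ∘ φ ∧
      (∀ F : Finset (Vtx d),
        (∃ n, 1 ≤ n ∧ n ≤ 2 * d ∧ F = (sigB d n).image φ) ↔
          (∃ n, 1 ≤ n ∧ n ≤ 2 * d ∧ F = σ n)) ∧
      (∀ G : Finset (Vtx d),
        (∃ F : Finset (Vtx d),
            (∃ n, 1 ≤ n ∧ n ≤ 2 * d ∧ F ⊆ sigB d n) ∧ G = F.image φ) ↔
          (∃ n, 1 ≤ n ∧ n ≤ 2 * d ∧ G ⊆ σ n))) := by
  have : NeZero d := ⟨by omega⟩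
  obtain ⟨F, hσ⟩ : ∃ F : ℕ → ZMod d → Bool, ∀ i, σ i = signFacet (F i) :=
    ⟨_, fun i => eq_signFacet (hfacet i).1 (by rw [(hfacet i).2, ZMod.card])⟩
  obtain ⟨c, hstep⟩ : ∃ c : ℕ → ZMod d, ∀ i, F (i + 1) = update (F i) (c i) (!F i (c i)) :=
    ⟨_, fun i =>
      (exists_eq_update_of_card_inter (by rw [← hσ, ← hσ, hadj, ZMod.card])).choose_spec⟩
  have hcyc : IsAntipodalFlipCycle F c := ⟨hstep, fun i => signFacet_injective <| by
    rw [ZMod.card, ← hσ, hanti, hσ, ← image_antipode_signFacet]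
    rfl⟩
  obtain ⟨φ, hφα, hφ⟩ := exists_equiv_image_sigB hcyc
  refine ⟨⟨fun i => (c i, F i (c i)), ?_, fun a ha b hb hab => ?_, fun i _ _ => ?_⟩,
    fun i j hi hi' hj hj' hij => ?_, φ, φ.bijective, hφα, fun G => ?_, fun G => ?_⟩
  · rw [hσ, ← hcyc.image_window_eq_signFacet 1, ZMod.card, add_comm, Ico_add_one_right_eq_Icc]
  · rw [mem_Icc] at ha hb
    exact hcyc.injOn_flip_window 1 (by simp; omega) (by simp; omega) (Prod.mk.inj hab).1
  · rw [hσ, hσ, hstep, signFacet_update_not]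
    rfl
  · exact hcyc.injOn_sign_window_two_mul 1 (by simp; omega) (by simp; omega)
      (signFacet_injective (by rw [← hσ, ← hσ, hij]))
  · exact exists_congr fun n => and_congr_right fun h1 => and_congr_right fun h2 => by
      rw [hφ n h1 h2, hσ]
  · constructor
    · rintro ⟨G', ⟨n, h1, h2, hG'⟩, rfl⟩
      exact ⟨n, h1, h2, hσ n ▸ hφ n h1 h2 ▸ image_subset_image hG'⟩
    · rintro ⟨n, h1, h2, hG⟩
      rw [hσ, ← hφ n h1 h2, subset_image_iff] at hG
      obtain ⟨G', hG', rfl⟩ := hG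
      exact ⟨G', ⟨n, h1, h2, hG'⟩, rfl⟩

/-- Let `d ≥ 2` and let `σ_1, …, σ_{2d}` be facets of `∂C_d^*` (indices read
mod `2d`, encoded by periodicity of `σ : ℕ → Finset (Vtx d)`) with `|σ_i ∩ σ_{i+1}| = d-1`
and `σ_{i+d} = α(σ_i)` for all `i`. Then: (1) there is an enumeration `u_1, …, u_d` of the
vertices of `σ_1` with `σ_{i+1} = (σ_i \ {u_i}) ∪ {α(u_i)}` for `1 ≤ i ≤ d`; (2) the facets
`σ_1, …, σ_{2d}` are pairwise distinct; (3) there is a bijection `φ` of the vertex set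
commuting with `α` that maps the `2d` facets of `B(1,d)` bijectively onto `{σ_1, …, σ_{2d}}`,
so the complex generated by the `σ_i` is simplicially isomorphic to `B(1,d)`. -/
theorem statement3 (d : ℕ) (hd : 2 ≤ d)
    (σ : ℕ → Finset (Vtx d))
    (hper : ∀ i, σ (i + 2 * d) = σ i)
    (hfacet : ∀ i, (∀ r : ZMod d, ¬ (((r, false) ∈ σ i) ∧ ((r, true) ∈ σ i))) ∧
      (σ i).card = d)
    (hadj : ∀ i, (σ i ∩ σ (i + 1)).card = d - 1)
    (hanti : ∀ i, σ (i + d) = (σ i).image (alphaV d)) :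
    (∃ u : ℕ → Vtx d,
      ((Finset.Icc 1 d).image u = σ 1) ∧
      (∀ a ∈ Finset.Icc 1 d, ∀ b ∈ Finset.Icc 1 d, u a = u b → a = b) ∧
      (∀ i, 1 ≤ i → i ≤ d →
        σ (i + 1) = insert (alphaV d (u i)) ((σ i).erase (u i)))) ∧
    (∀ i j, 1 ≤ i → i ≤ 2 * d → 1 ≤ j → j ≤ 2 * d → σ i = σ j → i = j) ∧
    (∃ φ : Vtx d → Vtx d, Function.Bijective φ ∧
      φ ∘ alphaV d = alphaV d ∘ φ ∧
      (∀ F : Finset (Vtx d),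
        (∃ n, 1 ≤ n ∧ n ≤ 2 * d ∧ F = (sigB d n).image φ) ↔
          (∃ n, 1 ≤ n ∧ n ≤ 2 * d ∧ F = σ n)) ∧
      (∀ G : Finset (Vtx d),
        (∃ F : Finset (Vtx d),
            (∃ n, 1 ≤ n ∧ n ≤ 2 * d ∧ F ⊆ sigB d n) ∧ G = F.image φ) ↔
          (∃ n, 1 ≤ n ∧ n ≤ 2 * d ∧ G ⊆ σ n))) :=
  statement3_general d hd σ hfacet hadj hanti

end SpherePaper
end

section
/- Let d = 2m+1 be odd with d ≥ 3. Then there exists a bijection φ : V_d → V_d with φ ∘ α = α ∘ φ that maps the 2d facets of B(1,d) bijectively onto the facets of Γ_m ∪ Γ_{m+1}; in particular, the complex Γ_m ∪ Γ_{m+1} is simplicially isomorphic to B(1,d). -/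
namespace SpherePaper

/-! ### Auxiliary definitions and lemmas -/

/-- The "sign" of a vertex index: `true` iff the representative in `[1, d]` is odd. -/
private def eps (d : ℕ) (v : ZMod d) : Bool := decide ((v - 1).val % 2 = 0)

/-- The vertex bijection: index `v ↦ (m+1)(v+1)` (note `m+1 = 2⁻¹` in `ZMod (2m+1)`),
and flip `x/y` exactly at indices with odd representative in `[1, d]`. -/
private def phi (m : ℕ) (p : Vtx (2*m+1)) : Vtx (2*m+1) :=
  (((m : ZMod (2*m+1)) + 1) * (p.1 + 1), xor p.2 (eps (2*m+1) p.1))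

/-- Explicit inverse of `phi`. -/
private def psi (m : ℕ) (p : Vtx (2*m+1)) : Vtx (2*m+1) :=
  (p.1 * 2 - 1, xor p.2 (eps (2*m+1) (p.1 * 2 - 1)))

private lemma phi_apply (m : ℕ) (v : ZMod (2*m+1)) (b : Bool) :
    phi m (v, b) = (((m : ZMod (2*m+1)) + 1) * (v + 1), xor b (eps (2*m+1) v)) := rfl

private lemma key (m : ℕ) : ((m : ZMod (2*m+1)) + 1) * 2 = 1 := by
  have := ZMod.natCast_self (2*m+1)
  push_cast at this
  linear_combination this

private lemma cast_add_d (d a : ℕ) : ((a + d : ℕ) : ZMod d) = (a : ZMod d) := by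
  rw [Nat.cast_add, ZMod.natCast_self, add_zero]

private lemma eps_cast (m t : ℕ) (ht : t < 2*m+1) :
    eps (2*m+1) ((t+1 : ℕ) : ZMod (2*m+1)) = decide (t % 2 = 0) := by
  have h : (((t+1 : ℕ) : ZMod (2*m+1)) - 1) = ((t : ℕ) : ZMod (2*m+1)) := by push_cast; ring
  rw [eps, h, ZMod.val_cast_of_lt ht]

private lemma decide_xor_decide (P Q R : Prop) [Decidable P] [Decidable Q] [Decidable R]
    (h : P ↔ ¬(Q ↔ R)) : decide P = xor (decide Q) (decide R) := by
  by_cases hq : Q <;> by_cases hr : R <;> simp_all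

private lemma sigB_le (d n : ℕ) (h1 : 1 ≤ n) (h2 : n ≤ d) :
    sigB d n = (Finset.range d).image
      (fun t => (((t + 1 : ℕ) : ZMod d), decide (n < t + 1))) := by
  have e1 : (n-1) % (2*d) = n - 1 := Nat.mod_eq_of_lt (by omega)
  have e2 : n - 1 + 1 = n := by omega
  rw [sigB, e1, e2, if_pos h2]

private lemma sigB_gt (d n : ℕ) (h1 : d < n) (h2 : n ≤ 2*d) :
    sigB d n = (Finset.range d).image
      (fun t => (((t + 1 : ℕ) : ZMod d), decide (t + 1 ≤ n - d))) := by
  have e1 : (n-1) % (2*d) = n - 1 := Nat.mod_eq_of_lt (by omega)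
  have e2 : n - 1 + 1 = n := by omega
  rw [sigB, e1, e2, if_neg (by omega)]

private lemma tau_shift (d j k : ℕ) : tau d j (k + d) = tau d j k := by
  unfold tau
  apply Finset.image_congr
  intro t _
  have h : k + d + t = (k + t) + d := by omega
  simp only [h, cast_add_d]

private lemma card_tau (d j k : ℕ) [NeZero d] : (tau d j k).card = d := by
  rw [tau, Finset.card_image_of_injOn, Finset.card_range]
  intro s hs t ht h
  simp only [Finset.coe_range, Set.mem_Iio] at hs ht
  have h1 : ((k + s : ℕ) : ZMod d) = ((k + t : ℕ) : ZMod d) := congrArg Prod.fst h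
  have h2 : (k + s) % d = (k + t) % d := (ZMod.natCast_eq_natCast_iff _ _ _).mp h1
  have h3 : s ≡ t [MOD d] := Nat.ModEq.add_left_cancel' k h2
  have h4 : s % d = t % d := h3
  rwa [Nat.mod_eq_of_lt hs, Nat.mod_eq_of_lt ht] at h4

private lemma card_phi_sig (m : ℕ) (f : ℕ → Bool) :
    ((Finset.range (2*m+1)).image
      (phi m ∘ fun t => (((t + 1 : ℕ) : ZMod (2*m+1)), f t))).card = 2*m+1 := by
  have hk := key m
  rw [Finset.card_image_of_injOn, Finset.card_range]
  intro s hs t ht h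
  simp only [Finset.coe_range, Set.mem_Iio] at hs ht
  simp only [Function.comp_apply, phi_apply] at h
  have h1 : ((m : ZMod (2*m+1)) + 1) * (((s + 1 : ℕ) : ZMod (2*m+1)) + 1)
      = ((m : ZMod (2*m+1)) + 1) * (((t + 1 : ℕ) : ZMod (2*m+1)) + 1) := congrArg Prod.fst h
  have h2 : ((s : ℕ) : ZMod (2*m+1)) = ((t : ℕ) : ZMod (2*m+1)) := by
    push_cast at h1 ⊢
    linear_combination 2*h1 + ((t : ZMod (2*m+1)) - (s : ZMod (2*m+1))) * hk
  have h3 : s % (2*m+1) = t % (2*m+1) := (ZMod.natCast_eq_natCast_iff _ _ _).mp h2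
  rwa [Nat.mod_eq_of_lt hs, Nat.mod_eq_of_lt ht] at h3


private lemma imageA (m r : ℕ) (hm : 1 ≤ m) (hr1 : 1 ≤ r) (hr2 : r ≤ m+1) :
    (sigB (2*m+1) (2*r-1)).image (phi m) = tau (2*m+1) (m+1) (m+1+r) := by
  have hk := key m
  rw [sigB_le (2*m+1) (2*r-1) (by omega) (by omega), Finset.image_image]
  apply Finset.eq_of_subset_of_card_le
  · intro p hp
    simp only [Finset.mem_image, Finset.mem_range, Function.comp_apply] at hp
    obtain ⟨t, ht, rfl⟩ := hp
    simp only [tau, Finset.mem_image, Finset.mem_range]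
    rcases Nat.even_or_odd t with ⟨u, rfl⟩ | ⟨u, rfl⟩
    · -- t = u + u
      refine ⟨u + m + 1 - r, by omega, ?_⟩
      simp only [phi_apply, eps_cast m (u+u) ht, Prod.mk.injEq]
      constructor
      · rw [show m + 1 + r + (u + m + 1 - r) = (u + 1) + (2*m+1) from by omega, cast_add_d]
        push_cast
        linear_combination (-(u : ZMod (2*m+1)) - 1) * hk
      · exact decide_xor_decide _ _ _ (by omega)
    · -- t = 2u+1
      by_cases hc : r ≤ u + 1
      · refine ⟨u + 1 - r, by omega, ?_⟩
        simp only [phi_apply, eps_cast m (2*u+1) ht, Prod.mk.injEq]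
        constructor
        · rw [show m + 1 + r + (u + 1 - r) = u + m + 2 from by omega]
          push_cast
          linear_combination (-(u : ZMod (2*m+1)) - 1) * hk
        · exact decide_xor_decide _ _ _ (by omega)
      · refine ⟨u + 2*m + 2 - r, by omega, ?_⟩
        simp only [phi_apply, eps_cast m (2*u+1) ht, Prod.mk.injEq]
        constructor
        · rw [show m + 1 + r + (u + 2*m + 2 - r) = (u + m + 2) + (2*m+1) from by omega,
            cast_add_d]
          push_cast
          linear_combination (-(u : ZMod (2*m+1)) - 1) * hk
        · exact decide_xor_decide _ _ _ (by omega)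
  · rw [card_tau, card_phi_sig]

private lemma imageB (m r : ℕ) (hm : 1 ≤ m) (hr1 : 1 ≤ r) (hr2 : r ≤ m) :
    (sigB (2*m+1) (2*r)).image (phi m) = tau (2*m+1) m (m+2+r) := by
  have hk := key m
  rw [sigB_le (2*m+1) (2*r) (by omega) (by omega), Finset.image_image]
  apply Finset.eq_of_subset_of_card_le
  · intro p hp
    simp only [Finset.mem_image, Finset.mem_range, Function.comp_apply] at hp
    obtain ⟨t, ht, rfl⟩ := hp
    simp only [tau, Finset.mem_image, Finset.mem_range]
    rcases Nat.even_or_odd t with ⟨u, rfl⟩ | ⟨u, rfl⟩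
    · refine ⟨u + m - r, by omega, ?_⟩
      simp only [phi_apply, eps_cast m (u+u) ht, Prod.mk.injEq]
      constructor
      · rw [show m + 2 + r + (u + m - r) = (u + 1) + (2*m+1) from by omega, cast_add_d]
        push_cast
        linear_combination (-(u : ZMod (2*m+1)) - 1) * hk
      · exact decide_xor_decide _ _ _ (by omega)
    · by_cases hc : r ≤ u
      · refine ⟨u - r, by omega, ?_⟩
        simp only [phi_apply, eps_cast m (2*u+1) ht, Prod.mk.injEq]
        constructor
        · rw [show m + 2 + r + (u - r) = u + m + 2 from by omega]
          push_cast
          linear_combination (-(u : ZMod (2*m+1)) - 1) * hk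
        · exact decide_xor_decide _ _ _ (by omega)
      · refine ⟨u + 2*m + 1 - r, by omega, ?_⟩
        simp only [phi_apply, eps_cast m (2*u+1) ht, Prod.mk.injEq]
        constructor
        · rw [show m + 2 + r + (u + 2*m + 1 - r) = (u + m + 2) + (2*m+1) from by omega,
            cast_add_d]
          push_cast
          linear_combination (-(u : ZMod (2*m+1)) - 1) * hk
        · exact decide_xor_decide _ _ _ (by omega)
  · rw [card_tau, card_phi_sig]

private lemma imageC (m r : ℕ) (hm : 1 ≤ m) (hr1 : 1 ≤ r) (hr2 : r ≤ m+1) :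
    (sigB (2*m+1) ((2*m+1) + (2*r-1))).image (phi m) = tau (2*m+1) m (r+1) := by
  have hk := key m
  rw [sigB_gt (2*m+1) ((2*m+1) + (2*r-1)) (by omega) (by omega),
    show (2*m+1) + (2*r-1) - (2*m+1) = 2*r-1 from by omega, Finset.image_image]
  apply Finset.eq_of_subset_of_card_le
  · intro p hp
    simp only [Finset.mem_image, Finset.mem_range, Function.comp_apply] at hp
    obtain ⟨t, ht, rfl⟩ := hp
    simp only [tau, Finset.mem_image, Finset.mem_range]
    rcases Nat.even_or_odd t with ⟨u, rfl⟩ | ⟨u, rfl⟩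
    · by_cases hc : r ≤ u
      · refine ⟨u - r, by omega, ?_⟩
        simp only [phi_apply, eps_cast m (u+u) ht, Prod.mk.injEq]
        constructor
        · rw [show r + 1 + (u - r) = u + 1 from by omega]
          push_cast
          linear_combination (-(u : ZMod (2*m+1)) - 1) * hk
        · exact decide_xor_decide _ _ _ (by omega)
      · refine ⟨u + 2*m + 1 - r, by omega, ?_⟩
        simp only [phi_apply, eps_cast m (u+u) ht, Prod.mk.injEq]
        constructor
        · rw [show r + 1 + (u + 2*m + 1 - r) = (u + 1) + (2*m+1) from by omega, cast_add_d]
          push_cast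
          linear_combination (-(u : ZMod (2*m+1)) - 1) * hk
        · exact decide_xor_decide _ _ _ (by omega)
    · refine ⟨u + m + 1 - r, by omega, ?_⟩
      simp only [phi_apply, eps_cast m (2*u+1) ht, Prod.mk.injEq]
      constructor
      · rw [show r + 1 + (u + m + 1 - r) = u + m + 2 from by omega]
        push_cast
        linear_combination (-(u : ZMod (2*m+1)) - 1) * hk
      · exact decide_xor_decide _ _ _ (by omega)
  · rw [card_tau, card_phi_sig]

private lemma imageD (m r : ℕ) (hm : 1 ≤ m) (hr1 : 1 ≤ r) (hr2 : r ≤ m) :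
    (sigB (2*m+1) ((2*m+1) + 2*r)).image (phi m) = tau (2*m+1) (m+1) (r+1) := by
  have hk := key m
  rw [sigB_gt (2*m+1) ((2*m+1) + 2*r) (by omega) (by omega),
    show (2*m+1) + 2*r - (2*m+1) = 2*r from by omega, Finset.image_image]
  apply Finset.eq_of_subset_of_card_le
  · intro p hp
    simp only [Finset.mem_image, Finset.mem_range, Function.comp_apply] at hp
    obtain ⟨t, ht, rfl⟩ := hp
    simp only [tau, Finset.mem_image, Finset.mem_range]
    rcases Nat.even_or_odd t with ⟨u, rfl⟩ | ⟨u, rfl⟩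
    · by_cases hc : r ≤ u
      · refine ⟨u - r, by omega, ?_⟩
        simp only [phi_apply, eps_cast m (u+u) ht, Prod.mk.injEq]
        constructor
        · rw [show r + 1 + (u - r) = u + 1 from by omega]
          push_cast
          linear_combination (-(u : ZMod (2*m+1)) - 1) * hk
        · exact decide_xor_decide _ _ _ (by omega)
      · refine ⟨u + 2*m + 1 - r, by omega, ?_⟩
        simp only [phi_apply, eps_cast m (u+u) ht, Prod.mk.injEq]
        constructor
        · rw [show r + 1 + (u + 2*m + 1 - r) = (u + 1) + (2*m+1) from by omega, cast_add_d]
          push_cast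
          linear_combination (-(u : ZMod (2*m+1)) - 1) * hk
        · exact decide_xor_decide _ _ _ (by omega)
    · refine ⟨u + m + 1 - r, by omega, ?_⟩
      simp only [phi_apply, eps_cast m (2*u+1) ht, Prod.mk.injEq]
      constructor
      · rw [show r + 1 + (u + m + 1 - r) = u + m + 2 from by omega]
        push_cast
        linear_combination (-(u : ZMod (2*m+1)) - 1) * hk
      · exact decide_xor_decide _ _ _ (by omega)
  · rw [card_tau, card_phi_sig]

private lemma psi_left (m : ℕ) : Function.LeftInverse (psi m) (phi m) := by
  intro p
  obtain ⟨v, b⟩ := p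
  have hk := key m
  have hidx : (((m : ZMod (2*m+1)) + 1) * (v + 1)) * 2 - 1 = v := by
    linear_combination ((v : ZMod (2*m+1)) + 1) * hk
  simp only [phi, psi]
  rw [hidx]
  simp [Bool.xor_assoc]

private lemma psi_right (m : ℕ) : Function.RightInverse (psi m) (phi m) := by
  intro p
  obtain ⟨w, c⟩ := p
  have hk := key m
  have hidx : ((m : ZMod (2*m+1)) + 1) * ((w * 2 - 1) + 1) = w := by
    linear_combination (w : ZMod (2*m+1)) * hk
  simp only [phi, psi]
  rw [hidx]
  simp [Bool.xor_assoc]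

private lemma phi_bij (m : ℕ) : Function.Bijective (phi m) :=
  Function.bijective_iff_has_inverse.mpr ⟨psi m, psi_left m, psi_right m⟩

private lemma phi_comm (m : ℕ) :
    phi m ∘ alphaV (2*m+1) = alphaV (2*m+1) ∘ phi m := by
  funext p
  obtain ⟨v, b⟩ := p
  simp only [Function.comp_apply, alphaV, phi]
  cases b <;> simp

private lemma forward (m : ℕ) (hm : 1 ≤ m) (n : ℕ) (h1 : 1 ≤ n) (h2 : n ≤ 2*(2*m+1)) :
    ∃ j k, (j = m ∨ j = m+1) ∧ 1 ≤ k ∧ k ≤ 2*m+1 ∧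
      (sigB (2*m+1) n).image (phi m) = tau (2*m+1) j k := by
  rcases le_or_gt n (2*m+1) with h | h
  · rcases Nat.even_or_odd n with ⟨r, hn⟩ | ⟨r, hn⟩
    · have hB := imageB m r hm (by omega) (by omega)
      rw [show n = 2*r from by omega]
      by_cases hc : r = m
      · rw [show m+2+r = 1+(2*m+1) from by omega, tau_shift] at hB
        exact ⟨m, 1, Or.inl rfl, by omega, by omega, hB⟩
      · exact ⟨m, m+2+r, Or.inl rfl, by omega, by omega, hB⟩
    · have hA := imageA m (r+1) hm (by omega) (by omega)
      rw [show n = 2*(r+1)-1 from by omega]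
      by_cases hc : r = m
      · rw [show m+1+(r+1) = 1+(2*m+1) from by omega, tau_shift] at hA
        exact ⟨m+1, 1, Or.inr rfl, by omega, by omega, hA⟩
      · exact ⟨m+1, m+1+(r+1), Or.inr rfl, by omega, by omega, hA⟩
  · rcases Nat.even_or_odd (n - (2*m+1)) with ⟨r, hn⟩ | ⟨r, hn⟩
    · rw [show n = (2*m+1) + 2*r from by omega]
      exact ⟨m+1, r+1, Or.inr rfl, by omega, by omega,
        imageD m r hm (by omega) (by omega)⟩
    · rw [show n = (2*m+1) + (2*(r+1)-1) from by omega]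
      exact ⟨m, r+1+1, Or.inl rfl, by omega, by omega,
        imageC m (r+1) hm (by omega) (by omega)⟩

private lemma backward (m : ℕ) (hm : 1 ≤ m) (j k : ℕ) (hj : j = m ∨ j = m+1)
    (hk1 : 1 ≤ k) (hk2 : k ≤ 2*m+1) :
    ∃ n, 1 ≤ n ∧ n ≤ 2*(2*m+1) ∧ (sigB (2*m+1) n).image (phi m) = tau (2*m+1) j k := by
  rcases hj with hj | hj <;> rw [hj]
  · by_cases h1 : k = 1
    · subst h1
      have hB := imageB m m hm (by omega) le_rfl
      rw [show m+2+m = 1+(2*m+1) from by omega, tau_shift] at hB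
      exact ⟨2*m, by omega, by omega, hB⟩
    · by_cases h2 : k ≤ m+2
      · have hC := imageC m (k-1) hm (by omega) (by omega)
        rw [show k-1+1 = k from by omega] at hC
        exact ⟨(2*m+1) + (2*(k-1)-1), by omega, by omega, hC⟩
      · have hB := imageB m (k-m-2) hm (by omega) (by omega)
        rw [show m+2+(k-m-2) = k from by omega] at hB
        exact ⟨2*(k-m-2), by omega, by omega, hB⟩
  · by_cases h1 : k = 1
    · subst h1
      have hA := imageA m (m+1) hm (by omega) le_rfl
      rw [show m+1+(m+1) = 1+(2*m+1) from by omega, tau_shift] at hA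
      exact ⟨2*(m+1)-1, by omega, by omega, hA⟩
    · by_cases h2 : k ≤ m+1
      · have hD := imageD m (k-1) hm (by omega) (by omega)
        rw [show k-1+1 = k from by omega] at hD
        exact ⟨(2*m+1) + 2*(k-1), by omega, by omega, hD⟩
      · have hA := imageA m (k-m-1) hm (by omega) (by omega)
        rw [show m+1+(k-m-1) = k from by omega] at hA
        exact ⟨2*(k-m-1)-1, by omega, by omega, hA⟩

private lemma tau_mem_union (m j k : ℕ) (hj : j = m ∨ j = m+1)
    (hk1 : 1 ≤ k) (hk2 : k ≤ 2*m+1) :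
    tau (2*m+1) j k ∈ Gamma (2*m+1) m ∪ Gamma (2*m+1) (m+1) := by
  rcases hj with hj | hj <;> rw [hj]
  · exact Or.inl ⟨k, hk1, hk2, subset_rfl⟩
  · exact Or.inr ⟨k, hk1, hk2, subset_rfl⟩

private lemma facet_iff (m : ℕ) (F : Finset (Vtx (2*m+1))) :
    IsFacetOf (Gamma (2*m+1) m ∪ Gamma (2*m+1) (m+1)) F ↔
      ∃ j k, (j = m ∨ j = m+1) ∧ 1 ≤ k ∧ k ≤ 2*m+1 ∧ F = tau (2*m+1) j k := by
  constructor
  · rintro ⟨hmem, hmax⟩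
    rcases hmem with ⟨k, hk1, hk2, hsub⟩ | ⟨k, hk1, hk2, hsub⟩
    · exact ⟨m, k, Or.inl rfl, hk1, hk2,
        hmax _ (Or.inl ⟨k, hk1, hk2, subset_rfl⟩) hsub⟩
    · exact ⟨m+1, k, Or.inr rfl, hk1, hk2,
        hmax _ (Or.inr ⟨k, hk1, hk2, subset_rfl⟩) hsub⟩
  · rintro ⟨j, k, hj, hk1, hk2, rfl⟩
    refine ⟨tau_mem_union m j k hj hk1 hk2, ?_⟩
    intro G hG hsub
    have hGsub : ∃ j' k', G ⊆ tau (2*m+1) j' k' := by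
      rcases hG with ⟨k', _, _, h⟩ | ⟨k', _, _, h⟩
      exacts [⟨m, k', h⟩, ⟨m+1, k', h⟩]
    obtain ⟨j', k', hG'⟩ := hGsub
    apply Finset.eq_of_subset_of_card_le hsub
    calc G.card ≤ (tau (2*m+1) j' k').card := Finset.card_le_card hG'
      _ = 2*m+1 := card_tau _ _ _
      _ = (tau (2*m+1) j k).card := (card_tau _ _ _).symm

/-- Let `d = 2m+1` be odd, `d ≥ 3`. Then there is a bijection `φ` of the
vertex set of `∂C_d^*` commuting with the antipodal map `α` that maps the `2d` facets of
`B(1,d)` bijectively onto the facets of `Γ_m ∪ Γ_{m+1}`; in particular, `Γ_m ∪ Γ_{m+1}`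
(as a complex, i.e. the image of the face set of `B(1,d)` under `φ`) is simplicially
isomorphic to `B(1,d)`. -/
theorem statement5 (m : ℕ) (hm : 1 ≤ m) :
    ∃ φ : Vtx (2 * m + 1) → Vtx (2 * m + 1), Function.Bijective φ ∧
      φ ∘ alphaV (2 * m + 1) = alphaV (2 * m + 1) ∘ φ ∧
      (∀ F : Finset (Vtx (2 * m + 1)),
        (∃ n, 1 ≤ n ∧ n ≤ 2 * (2 * m + 1) ∧ F = (sigB (2 * m + 1) n).image φ) ↔
          IsFacetOf (Gamma (2 * m + 1) m ∪ Gamma (2 * m + 1) (m + 1)) F) ∧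
      (∀ G : Finset (Vtx (2 * m + 1)),
        (∃ F : Finset (Vtx (2 * m + 1)),
            (∃ n, 1 ≤ n ∧ n ≤ 2 * (2 * m + 1) ∧ F ⊆ sigB (2 * m + 1) n) ∧
            G = F.image φ) ↔
          G ∈ Gamma (2 * m + 1) m ∪ Gamma (2 * m + 1) (m + 1)) := by
  refine ⟨phi m, phi_bij m, phi_comm m, ?_, ?_⟩
  · intro F
    constructor
    · rintro ⟨n, h1, h2, rfl⟩
      obtain ⟨j, k, hj, hk1, hk2, heq⟩ := forward m hm n h1 h2
      rw [heq]
      exact (facet_iff m _).mpr ⟨j, k, hj, hk1, hk2, rfl⟩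
    · intro hF
      obtain ⟨j, k, hj, hk1, hk2, rfl⟩ := (facet_iff m _).mp hF
      obtain ⟨n, h1, h2, heq⟩ := backward m hm j k hj hk1 hk2
      exact ⟨n, h1, h2, heq.symm⟩
  · intro G
    constructor
    · rintro ⟨F, ⟨n, h1, h2, hsub⟩, rfl⟩
      obtain ⟨j, k, hj, hk1, hk2, heq⟩ := forward m hm n h1 h2
      have hsub2 : F.image (phi m) ⊆ tau (2*m+1) j k :=
        heq ▸ Finset.image_subset_image hsub
      rcases hj with hj | hj <;> rw [hj] at hsub2
      · exact Or.inl ⟨k, hk1, hk2, hsub2⟩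
      · exact Or.inr ⟨k, hk1, hk2, hsub2⟩
    · intro hG
      have hex : ∃ j k, (j = m ∨ j = m+1) ∧ 1 ≤ k ∧ k ≤ 2*m+1 ∧
          G ⊆ tau (2*m+1) j k := by
        rcases hG with ⟨k, hk1, hk2, h⟩ | ⟨k, hk1, hk2, h⟩
        exacts [⟨m, k, Or.inl rfl, hk1, hk2, h⟩, ⟨m+1, k, Or.inr rfl, hk1, hk2, h⟩]
      obtain ⟨j, k, hj, hk1, hk2, hsub⟩ := hex
      obtain ⟨n, h1, h2, heq⟩ := backward m hm j k hj hk1 hk2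
      refine ⟨G.image (psi m), ⟨n, h1, h2, ?_⟩, ?_⟩
      · intro x hx
        simp only [Finset.mem_image] at hx
        obtain ⟨y, hy, rfl⟩ := hx
        have hy2 : y ∈ (sigB (2*m+1) n).image (phi m) := heq ▸ hsub hy
        simp only [Finset.mem_image] at hy2
        obtain ⟨z, hz, rfl⟩ := hy2
        rwa [psi_left m z]
      · rw [Finset.image_image,
          show phi m ∘ psi m = id from funext fun y => psi_right m y,
          Finset.image_id]

end SpherePaper
end

section
/- Let d = 2m be even with d ≥ 4. Let γ be the complex generated by {τ_{m−1}^k : 1 ≤ k ≤ m} and −γ the complex generated by {τ_{m+1}^k : m ≤ k ≤ d−1}. Define facets σ_1, …, σ_{2d} of ∂C_d^* (indices mod 2d) by σ_{2k−1} = τ_{m−1}^k for 1 ≤ k ≤ m, σ_{2k} = τ_m^k for 1 ≤ k ≤ d, and σ_{2k+1} = τ_{m+1}^k for m ≤ k ≤ d−1. Then: (i) |σ_i ∩ σ_{i+1}| = d−1 for all i; (ii) σ_{i+d} = α(σ_i) for all i; (iii) the σ_i are pairwise distinct and {σ_1, …, σ_{2d}} is exactly the set of facets of Γ_m ∪ γ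 ∪ (−γ); and (iv) for any i ≠ j, |σ_i ∩ σ_j| = d−1 implies j ≡ i ± 1 (mod 2d), i.e., the facet-ridge graph of Γ_m ∪ γ ∪ (−γ) is a 2d-cycle. -/
namespace SpherePaper

variable {d : ℕ}

lemma sub_mod_add (hd : 0 < d) (k : ℕ) : ((d - k % d) + k) % d = 0 := by
  have h : k % d < d := Nat.mod_lt _ hd
  rw [Nat.add_mod]
  rcases Nat.eq_zero_or_pos (k % d) with h0 | h0
  · simp [h0, Nat.mod_self]
  · rw [Nat.mod_eq_of_lt (show d - k % d < d by omega)]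
    rw [show d - k % d + k % d = d by omega, Nat.mod_self]

lemma mod_eq_of_add (hd : 0 < d) (x x' y : ℕ) (h : (x + y) % d = 0)
    (h' : (x' + y) % d = 0) : x % d = x' % d := by
  have e1 : (x + (x' + y)) % d = x % d := by
    rw [Nat.add_mod, h', Nat.add_zero, Nat.mod_mod_of_dvd _ dvd_rfl]
  have e2 : (x' + (x + y)) % d = x' % d := by
    rw [Nat.add_mod, h, Nat.add_zero, Nat.mod_mod_of_dvd _ dvd_rfl]
  rw [← e1, ← e2]
  ring_nf

lemma add_shift_cancel (hd : 0 < d) (c t : ℕ) (ht : t < d) :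
    (t + c + (d - c % d)) % d = t := by
  have h1 : c % d < d := Nat.mod_lt _ hd
  have h2 : c % d ≤ c := Nat.mod_le c d
  have h3 : (c - c % d) % d = 0 :=
    Nat.sub_mod_eq_zero_of_mod_eq (by rw [Nat.mod_mod_of_dvd _ dvd_rfl])
  rw [show t + c + (d - c % d) = (t + d) + (c - c % d) by omega,
    Nat.add_mod, h3, Nat.add_zero, Nat.mod_mod_of_dvd _ dvd_rfl,
    Nat.add_mod_right, Nat.mod_eq_of_lt ht]

lemma shift_cancel₁ (hd : 0 < d) (c t : ℕ) (ht : t < d) :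
    ((t + c) % d + (d - c % d)) % d = t := by
  rw [Nat.mod_add_mod]; exact add_shift_cancel hd c t ht

lemma shift_cancel₂ (hd : 0 < d) (c t : ℕ) (ht : t < d) :
    ((t + (d - c % d)) % d + c) % d = t := by
  rw [Nat.mod_add_mod, show t + (d - c % d) + c = t + c + (d - c % d) by ring]
  exact add_shift_cancel hd c t ht

lemma mod_two_cases (hd : 0 < d) {a : ℕ} (h : a ≤ 2 * d) :
    (a < d ∧ a % d = a) ∨ (d ≤ a ∧ a < 2 * d ∧ a % d = a - d) ∨
      (a = 2 * d ∧ a % d = 0) := by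
  rcases Nat.lt_or_ge a d with h1 | h1
  · exact Or.inl ⟨h1, Nat.mod_eq_of_lt h1⟩
  · rcases Nat.lt_or_ge a (2 * d) with h2 | h2
    · refine Or.inr (Or.inl ⟨h1, h2, ?_⟩)
      rw [Nat.mod_eq_sub_mod h1, Nat.mod_eq_of_lt (by omega)]
    · have ha : a = 2 * d := by omega
      subst ha
      exact Or.inr (Or.inr ⟨rfl, by simp [Nat.mul_mod_right]⟩)

def gset (d c j : ℕ) : Finset (Vtx d) :=
  (Finset.range d).image fun t : ℕ => ((t : ZMod d), decide ((t + c) % d < j))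

lemma tau_graph (hd : 0 < d) (j k : ℕ) : tau d j k = gset d (d - k % d) j := by
  haveI : NeZero d := ⟨by omega⟩
  ext ⟨a, b⟩
  simp only [tau, gset, Finset.mem_image, Finset.mem_range]
  constructor
  · rintro ⟨t, ht, he⟩
    refine ⟨(k + t) % d, Nat.mod_lt _ hd, ?_⟩
    have h2 : ((k + t) % d + (d - k % d)) % d = t := by
      rw [Nat.add_comm k t]; exact shift_cancel₁ hd k t ht
    rw [h2, ZMod.natCast_mod]
    exact he
  · rintro ⟨s, hs, he⟩
    refine ⟨(s + (d - k % d)) % d, Nat.mod_lt _ hd, ?_⟩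
    have hle : k % d ≤ d := (Nat.mod_lt _ hd).le
    have h1 : ((k + (s + (d - k % d)) % d : ℕ) : ZMod d) = (s : ZMod d) := by
      rw [Nat.cast_add, ZMod.natCast_mod, Nat.cast_add, Nat.cast_sub hle,
        ZMod.natCast_self, ZMod.natCast_mod]
      ring
    rw [← he]
    exact Prod.ext h1 rfl

lemma gset_card (hd : 0 < d) (c j : ℕ) : (gset d c j).card = d := by
  haveI : NeZero d := ⟨by omega⟩
  rw [gset, Finset.card_image_of_injOn, Finset.card_range]
  intro t1 h1 t2 h2 he
  simp only [Finset.coe_range, Set.mem_Iio] at h1 h2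
  have h3 : ((t1 : ZMod d)) = (t2 : ZMod d) := congrArg Prod.fst he
  have h4 := congrArg ZMod.val h3
  rwa [ZMod.val_cast_of_lt h1, ZMod.val_cast_of_lt h2] at h4

lemma tau_card (hd : 0 < d) (j k : ℕ) : (tau d j k).card = d := by
  rw [tau_graph hd, gset_card hd]

lemma gset_congr (hd : 0 < d) {c c' : ℕ} (j : ℕ) (h : c % d = c' % d) :
    gset d c j = gset d c' j := by
  unfold gset
  apply Finset.image_congr
  intro t ht
  have h2 : (t + c) % d = (t + c') % d := by
    rw [Nat.add_mod t c, Nat.add_mod t c', h]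
  simp only [h2]

lemma tau_mod (hd : 0 < d) (j k : ℕ) : tau d j (k + d) = tau d j k := by
  rw [tau_graph hd j (k + d), tau_graph hd j k, Nat.add_mod_right]

lemma gset_inter_card (hd : 0 < d) (c1 j1 c2 j2 : ℕ) :
    (gset d c1 j1 ∩ gset d c2 j2).card =
      ((Finset.range d).filter
        (fun t => ((t + c1) % d < j1 ↔ (t + c2) % d < j2))).card := by
  haveI : NeZero d := ⟨by omega⟩
  have hinter : gset d c1 j1 ∩ gset d c2 j2 =
      ((Finset.range d).filter
        (fun t => ((t + c1) % d < j1 ↔ (t + c2) % d < j2))).image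
        (fun t : ℕ => ((t : ZMod d), decide ((t + c1) % d < j1))) := by
    ext ⟨a, b⟩
    simp only [Finset.mem_inter, gset, Finset.mem_image, Finset.mem_filter,
      Finset.mem_range]
    constructor
    · rintro ⟨⟨t1, ht1, he1⟩, ⟨t2, ht2, he2⟩⟩
      have e1a : ((t1 : ZMod d)) = a := congrArg Prod.fst he1
      have e2a : ((t2 : ZMod d)) = a := congrArg Prod.fst he2
      have ht12 : t1 = t2 := by
        have h5 := e1a.trans e2a.symm
        have h6 := congrArg ZMod.val h5
        rwa [ZMod.val_cast_of_lt ht1, ZMod.val_cast_of_lt ht2] at h6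
      subst ht12
      have eb1 : decide ((t1 + c1) % d < j1) = b := congrArg Prod.snd he1
      have eb2 : decide ((t1 + c2) % d < j2) = b := congrArg Prod.snd he2
      exact ⟨t1, ⟨ht1, decide_eq_decide.mp (eb1.trans eb2.symm)⟩, he1⟩
    · rintro ⟨t, ⟨ht, hiff⟩, he⟩
      refine ⟨⟨t, ht, he⟩, ⟨t, ht, ?_⟩⟩
      rw [← he]
      exact Prod.ext rfl (decide_eq_decide.mpr hiff.symm)
  rw [hinter, Finset.card_image_of_injOn]
  intro t1 h1 t2 h2 he
  simp only [Finset.coe_filter, Finset.mem_range, Set.mem_setOf_eq] at h1 h2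
  have h3 : ((t1 : ZMod d)) = (t2 : ZMod d) := congrArg Prod.fst he
  have h4 := congrArg ZMod.val h3
  rwa [ZMod.val_cast_of_lt h1.1, ZMod.val_cast_of_lt h2.1] at h4

lemma count_two_intervals (n a b c : ℕ) (hab : a ≤ b) (hbc : b ≤ c) :
    ((Finset.range n).filter (fun u => u < a ∨ (b ≤ u ∧ u < c))).card
      = min n a + (min n c - min n b) := by
  have heq : (Finset.range n).filter (fun u => u < a ∨ (b ≤ u ∧ u < c))
      = Finset.range (min n a) ∪ Finset.Ico (min n b) (min n c) := by
    ext u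
    simp only [Finset.mem_filter, Finset.mem_range, Finset.mem_union, Finset.mem_Ico]
    omega
  have hdisj : Disjoint (Finset.range (min n a)) (Finset.Ico (min n b) (min n c)) := by
    rw [Finset.disjoint_left]
    intro u hu hv
    simp only [Finset.mem_range, Finset.mem_Ico] at hu hv
    omega
  rw [heq, Finset.card_union_of_disjoint hdisj, Finset.card_range, Nat.card_Ico]

lemma X_val (hd : 0 < d) (j1 j2 e : ℕ) (hj1 : j1 ≤ d) (hj2 : j2 ≤ d) (he : e < d) :
    ((Finset.range j1).filter (fun u => (u + e) % d < j2)).card =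
      if e ≤ j2 then min j1 (j2 - e) + (j1 - min j1 (d - e))
      else min j1 (d - e + j2) - min j1 (d - e) := by
  have hmod : ∀ u, u < j1 → (u + e) % d = if u + e < d then u + e else u + e - d := by
    intro u hu
    split_ifs with h
    · exact Nat.mod_eq_of_lt h
    · rw [Nat.mod_eq_sub_mod (le_of_not_gt h), Nat.mod_eq_of_lt (by omega)]
  have heq : (Finset.range j1).filter (fun u => (u + e) % d < j2) =
      (Finset.range j1).filter
        (fun u => u < j2 - e ∨ ((d - e) ≤ u ∧ u < d - e + j2)) := by
    ext u
    simp only [Finset.mem_filter, Finset.mem_range]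
    refine and_congr_right fun hu => ?_
    rw [hmod u hu]
    split_ifs with h <;> omega
  rw [heq, count_two_intervals j1 (j2 - e) (d - e) (d - e + j2) (by omega) (by omega)]
  split_ifs with h <;> omega

lemma gset_alpha (hd : 0 < d) (c j : ℕ) (hj : j ≤ d) :
    (gset d c j).image (alphaV d) = gset d (c + (d - j)) (d - j) := by
  unfold gset
  rw [Finset.image_image]
  apply Finset.image_congr
  intro t ht
  simp only [Finset.coe_range, Set.mem_Iio] at ht
  simp only [Function.comp, alphaV]
  have h1 : (t + (c + (d - j))) % d = ((t + c) % d + (d - j)) % d := by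
    rw [Nat.mod_add_mod, Nat.add_assoc]
  have hu : (t + c) % d < d := Nat.mod_lt _ hd
  have key : (((t + c) % d + (d - j)) % d < d - j) ↔ ¬ ((t + c) % d < j) := by
    rcases Nat.lt_or_ge ((t + c) % d) j with h | h
    · rw [Nat.mod_eq_of_lt (by omega)]; omega
    · rw [Nat.mod_eq_sub_mod (by omega), Nat.mod_eq_of_lt (by omega)]; omega
  have h2 : decide ((t + (c + (d - j))) % d < d - j) = !decide ((t + c) % d < j) := by
    rw [h1, show (!decide ((t + c) % d < j)) = decide (¬ ((t + c) % d < j)) from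
      decide_not.symm]
    exact decide_eq_decide.mpr key
  rw [h2]

lemma tau_alpha (hd : 0 < d) (j k : ℕ) (hj : j ≤ d) :
    (tau d j k).image (alphaV d) = tau d (d - j) (k + j) := by
  rw [tau_graph hd j k, tau_graph hd (d - j) (k + j), gset_alpha hd _ _ hj]
  apply gset_congr hd
  apply mod_eq_of_add hd _ _ (k + j)
  · have h1 : k % d < d := Nat.mod_lt _ hd
    have h2 : ∀ B, B < d → (d - B) + (d - j) + (k + j) = ((d - B) + k) + d :=
      fun B hB => by omega
    rw [h2 (k % d) h1, Nat.add_mod_right]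
    exact sub_mod_add hd k
  · exact sub_mod_add hd (k + j)

lemma tau_inter_card (hd : 0 < d) (j1 j2 k1 k2 : ℕ) (hj1 : j1 ≤ d) (hj2 : j2 ≤ d) :
    (tau d j1 k1 ∩ tau d j2 k2).card + j1 + j2 =
      d + 2 * ((Finset.range j1).filter
        (fun u => (u + (k1 + (d - k2 % d)) % d) % d < j2)).card := by
  rw [tau_graph hd j1 k1, tau_graph hd j2 k2, gset_inter_card hd]
  have key : ∀ t : ℕ, ((t + (d - k1 % d)) % d + (k1 + (d - k2 % d)) % d) % d
      = (t + (d - k2 % d)) % d := by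
    intro t
    rw [Nat.mod_add_mod, Nat.add_mod_mod,
      show t + (d - k1 % d) + (k1 + (d - k2 % d))
        = (t + (d - k2 % d)) + ((d - k1 % d) + k1) by ring,
      Nat.add_mod, sub_mod_add hd k1, Nat.add_zero, Nat.mod_mod_of_dvd _ dvd_rfl]
  -- reindex
  have hre : ((Finset.range d).filter
        (fun t => ((t + (d - k1 % d)) % d < j1 ↔ (t + (d - k2 % d)) % d < j2))).card =
      ((Finset.range d).filter
        (fun u => (u < j1 ↔ (u + (k1 + (d - k2 % d)) % d) % d < j2))).card := by
    apply Finset.card_bij' (fun t _ => (t + (d - k1 % d)) % d)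
      (fun u _ => (u + (d - (d - k1 % d) % d)) % d)
    · intro t ht
      simp only [Finset.mem_filter, Finset.mem_range] at ht ⊢
      refine ⟨Nat.mod_lt _ hd, ?_⟩
      rw [key t]
      exact ht.2
    · intro u hu
      simp only [Finset.mem_filter, Finset.mem_range] at hu ⊢
      refine ⟨Nat.mod_lt _ hd, ?_⟩
      have e1 : (((u + (d - (d - k1 % d) % d)) % d + (d - k1 % d)) % d) = u :=
        shift_cancel₂ hd (d - k1 % d) u hu.1
      have e2 := key ((u + (d - (d - k1 % d) % d)) % d)
      rw [e1] at e2
      rw [e1, ← e2]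
      exact hu.2
    · intro t ht
      simp only [Finset.mem_filter, Finset.mem_range] at ht
      exact shift_cancel₁ hd (d - k1 % d) t ht.1
    · intro u hu
      simp only [Finset.mem_filter, Finset.mem_range] at hu
      exact shift_cancel₂ hd (d - k1 % d) u hu.1
  rw [hre]
  -- generalize the shift
  obtain ⟨E, hE, hEd⟩ : ∃ E, (k1 + (d - k2 % d)) % d = E ∧ E < d :=
    ⟨_, rfl, Nat.mod_lt _ hd⟩
  rw [hE]
  -- counting
  have htot : ((Finset.range d).filter (fun u => (u + E) % d < j2)).card = j2 := by
    rw [X_val hd d j2 E le_rfl hj2 hEd]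
    split_ifs <;> omega
  have hA : ((Finset.range d).filter (fun u => u < j1)) = Finset.range j1 := by
    ext u
    simp only [Finset.mem_filter, Finset.mem_range]
    omega
  -- four pieces
  set F1 := (Finset.range d).filter (fun u => u < j1 ∧ (u + E) % d < j2) with hF1
  set F2 := (Finset.range d).filter (fun u => u < j1 ∧ ¬ (u + E) % d < j2) with hF2
  set F3 := (Finset.range d).filter (fun u => ¬ u < j1 ∧ (u + E) % d < j2) with hF3
  set F4 := (Finset.range d).filter (fun u => ¬ u < j1 ∧ ¬ (u + E) % d < j2) with hF4
  have d12 : Disjoint F1 F2 := by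
    rw [Finset.disjoint_left]
    intro u hu hv
    rw [hF1, Finset.mem_filter] at hu
    rw [hF2, Finset.mem_filter] at hv
    tauto
  have d34 : Disjoint F3 F4 := by
    rw [Finset.disjoint_left]
    intro u hu hv
    rw [hF3, Finset.mem_filter] at hu
    rw [hF4, Finset.mem_filter] at hv
    tauto
  have d13 : Disjoint F1 F3 := by
    rw [Finset.disjoint_left]
    intro u hu hv
    rw [hF1, Finset.mem_filter] at hu
    rw [hF3, Finset.mem_filter] at hv
    tauto
  have d14 : Disjoint F1 F4 := by
    rw [Finset.disjoint_left]
    intro u hu hv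
    rw [hF1, Finset.mem_filter] at hu
    rw [hF4, Finset.mem_filter] at hv
    tauto
  have d12_34 : Disjoint (F1 ∪ F2) (F3 ∪ F4) := by
    rw [Finset.disjoint_left]
    intro u hu hv
    simp only [hF1, hF2, hF3, hF4, Finset.mem_union, Finset.mem_filter] at hu hv
    tauto
  have q4 : Finset.range d = (F1 ∪ F2) ∪ (F3 ∪ F4) := by
    ext u
    simp only [hF1, hF2, hF3, hF4, Finset.mem_union, Finset.mem_filter, Finset.mem_range]
    tauto
  have hcard4 : d = F1.card + F2.card + (F3.card + F4.card) := by
    calc d = (Finset.range d).card := (Finset.card_range d).symm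
    _ = F1.card + F2.card + (F3.card + F4.card) := by
        rw [q4, Finset.card_union_of_disjoint d12_34, Finset.card_union_of_disjoint d12,
          Finset.card_union_of_disjoint d34]
  have q2 : (Finset.range d).filter (fun u => (u + E) % d < j2) = F1 ∪ F3 := by
    ext u
    simp only [hF1, hF3, Finset.mem_union, Finset.mem_filter, Finset.mem_range]
    tauto
  have hj2card : j2 = F1.card + F3.card := by
    rw [← htot, q2, Finset.card_union_of_disjoint d13]
  have q1 : (Finset.range d).filter (fun u => (u < j1 ↔ (u + E) % d < j2)) = F1 ∪ F4 := by
    ext u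
    simp only [hF1, hF4, Finset.mem_union, Finset.mem_filter, Finset.mem_range]
    tauto
  have hBcard : ((Finset.range d).filter
      (fun u => (u < j1 ↔ (u + E) % d < j2))).card = F1.card + F4.card := by
    rw [q1, Finset.card_union_of_disjoint d14]
  have q3 : (Finset.range j1).filter (fun u => (u + E) % d < j2) = F1 := by
    rw [hF1]
    ext u
    simp only [Finset.mem_filter, Finset.mem_range]
    constructor
    · rintro ⟨h1', h2'⟩
      exact ⟨by omega, h1', h2'⟩
    · rintro ⟨h1', h2', h3'⟩
      exact ⟨h2', h3'⟩
  have q3' : ((Finset.range j1).filter (fun u => (u + E) % d < j2)).card = F1.card := by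
    rw [q3]
  rw [hBcard, q3']
  -- need: F1+F4 + j1 + j2 = d + 2 F1
  -- have: d = F1+F2+F3+F4, j2 = F1+F3, j1 = F1+F2
  have hj1card : j1 = F1.card + F2.card := by
    have q5 : Finset.range j1 = F1 ∪ F2 := by
      ext u
      simp only [hF1, hF2, Finset.mem_union, Finset.mem_filter, Finset.mem_range]
      constructor
      · intro h
        by_cases hp : (u + E) % d < j2
        · exact Or.inl ⟨by omega, h, hp⟩
        · exact Or.inr ⟨by omega, h, hp⟩
      · rintro (⟨_, h, _⟩ | ⟨_, h, _⟩) <;> exact h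
    calc j1 = (Finset.range j1).card := (Finset.card_range j1).symm
    _ = F1.card + F2.card := by rw [q5, Finset.card_union_of_disjoint d12]
  omega

lemma pair_analysis (m : ℕ) (hm : 2 ≤ m) (ja ka jb kb : ℕ)
    (hka1 : 1 ≤ ka) (hka2 : ka ≤ 2 * m) (hkb1 : 1 ≤ kb) (hkb2 : kb ≤ 2 * m)
    (hja : ja ≤ 2 * m) (hjb : jb ≤ 2 * m) :
    ∃ E X : ℕ,
      ((kb ≤ ka ∧ E = ka - kb) ∨ (ka < kb ∧ E = ka + 2 * m - kb)) ∧
      E < 2 * m ∧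
      (tau (2 * m) ja ka ∩ tau (2 * m) jb kb).card + ja + jb = 2 * m + 2 * X ∧
      X ≤ ja ∧ X ≤ jb ∧
      (X = if E ≤ jb then min ja (jb - E) + (ja - min ja (2 * m - E))
        else min ja (2 * m - E + jb) - min ja (2 * m - E)) := by
  have hd : 0 < 2 * m := by omega
  have m1 := mod_two_cases hd (show kb ≤ 2 * (2 * m) by omega)
  have master := tau_inter_card hd ja jb ka kb hja hjb
  obtain ⟨r2, hr2⟩ : ∃ r, kb % (2 * m) = r := ⟨_, rfl⟩
  rw [hr2] at m1 master
  have m2 := mod_two_cases hd (show ka + (2 * m - r2) ≤ 2 * (2 * m) by omega)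
  obtain ⟨E, hE⟩ : ∃ E, (ka + (2 * m - r2)) % (2 * m) = E := ⟨_, rfl⟩
  rw [hE] at m2 master
  have hEd : E < 2 * m := hE ▸ Nat.mod_lt _ hd
  have hXv := X_val hd ja jb E hja hjb hEd
  have hXa : ((Finset.range ja).filter (fun u => (u + E) % (2 * m) < jb)).card ≤ ja := by
    calc ((Finset.range ja).filter (fun u => (u + E) % (2 * m) < jb)).card
        ≤ (Finset.range ja).card := Finset.card_filter_le _ _
      _ = ja := Finset.card_range ja
  have hXb : ((Finset.range ja).filter (fun u => (u + E) % (2 * m) < jb)).card ≤ jb := by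
    have hmono : ((Finset.range ja).filter (fun u => (u + E) % (2 * m) < jb)).card ≤
        ((Finset.range (2 * m)).filter (fun u => (u + E) % (2 * m) < jb)).card :=
      Finset.card_le_card (Finset.filter_subset_filter _ (Finset.range_subset_range.mpr hja))
    have htot := X_val hd (2 * m) jb E le_rfl hjb hEd
    have htot' : ((Finset.range (2 * m)).filter (fun u => (u + E) % (2 * m) < jb)).card
        = jb := by rw [htot]; split_ifs <;> omega
    omega
  have hrel : (kb ≤ ka ∧ E = ka - kb) ∨ (ka < kb ∧ E = ka + 2 * m - kb) := by omega
  exact ⟨E, _, hrel, hEd, master, hXa, hXb, hXv⟩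

set_option maxHeartbeats 2000000 in
/-- Let `d = 2m` be even, `d ≥ 4`; let `γ` be generated by `τ_{m-1}^k`
(`1 ≤ k ≤ m`) and `-γ` by `τ_{m+1}^k` (`m ≤ k ≤ d-1`). Define (indices mod `2d`, encoded by
periodicity) `σ_{2k-1} = τ_{m-1}^k` for `1 ≤ k ≤ m`, `σ_{2k} = τ_m^k` for `1 ≤ k ≤ d`, and
`σ_{2k+1} = τ_{m+1}^k` for `m ≤ k ≤ d-1`. Then: (i) `|σ_i ∩ σ_{i+1}| = d-1`;
(ii) `σ_{i+d} = α(σ_i)`; (iii) the `σ_i` are pairwise distinct and are exactly the facets of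
`Γ_m ∪ γ ∪ (-γ)`; (iv) `|σ_i ∩ σ_j| = d-1` with `i ≠ j` forces `j ≡ i ± 1 (mod 2d)`,
i.e. the facet-ridge graph is a `2d`-cycle. -/
theorem statement6 (m : ℕ) (hm : 2 ≤ m)
    (σ : ℕ → Finset (Vtx (2 * m)))
    (hper : ∀ i, σ (i + 2 * (2 * m)) = σ i)
    (h1 : ∀ k, 1 ≤ k → k ≤ m → σ (2 * k - 1) = tau (2 * m) (m - 1) k)
    (h2 : ∀ k, 1 ≤ k → k ≤ 2 * m → σ (2 * k) = tau (2 * m) m k)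
    (h3 : ∀ k, m ≤ k → k ≤ 2 * m - 1 → σ (2 * k + 1) = tau (2 * m) (m + 1) k) :
    (∀ i, 1 ≤ i → i ≤ 2 * (2 * m) → (σ i ∩ σ (i + 1)).card = 2 * m - 1) ∧
    (∀ i, 1 ≤ i → i ≤ 2 * (2 * m) →
      σ (i + 2 * m) = (σ i).image (alphaV (2 * m))) ∧
    (∀ i j, 1 ≤ i → i ≤ 2 * (2 * m) → 1 ≤ j → j ≤ 2 * (2 * m) →
      σ i = σ j → i = j) ∧
    (∀ F : Finset (Vtx (2 * m)),
      (∃ i, 1 ≤ i ∧ i ≤ 2 * (2 * m) ∧ F = σ i) ↔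
        IsFacetOf (Gamma (2 * m) m ∪
          {F | ∃ k, 1 ≤ k ∧ k ≤ m ∧ F ⊆ tau (2 * m) (m - 1) k} ∪
          {F | ∃ k, m ≤ k ∧ k ≤ 2 * m - 1 ∧ F ⊆ tau (2 * m) (m + 1) k}) F) ∧
    (∀ i j, 1 ≤ i → i ≤ 2 * (2 * m) → 1 ≤ j → j ≤ 2 * (2 * m) → i ≠ j →
      (σ i ∩ σ j).card = 2 * m - 1 →
      (j % (2 * (2 * m)) = (i + 1) % (2 * (2 * m)) ∨
        i % (2 * (2 * m)) = (j + 1) % (2 * (2 * m)))) := by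
  have hd : 0 < 2 * m := by omega
  have sig_char : ∀ i, 1 ≤ i → i ≤ 2 * (2 * m) → ∃ j k,
      ((j = m - 1 ∧ 1 ≤ k ∧ k ≤ m ∧ i = 2 * k - 1) ∨
       (j = m ∧ 1 ≤ k ∧ k ≤ 2 * m ∧ i = 2 * k) ∨
       (j = m + 1 ∧ m ≤ k ∧ k ≤ 2 * m - 1 ∧ i = 2 * k + 1)) ∧
      σ i = tau (2 * m) j k := by
    intro i hi1 hi2
    rcases Nat.even_or_odd i with ⟨k, hk⟩ | ⟨k, hk⟩
    · refine ⟨m, k, Or.inr (Or.inl ⟨rfl, by omega, by omega, by omega⟩), ?_⟩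
      rw [show i = 2 * k by omega]
      exact h2 k (by omega) (by omega)
    · rcases Nat.lt_or_ge k m with h | h
      · refine ⟨m - 1, k + 1, Or.inl ⟨rfl, by omega, by omega, by omega⟩, ?_⟩
        rw [show i = 2 * (k + 1) - 1 by omega]
        exact h1 (k + 1) (by omega) (by omega)
      · refine ⟨m + 1, k, Or.inr (Or.inr ⟨rfl, by omega, by omega, by omega⟩), ?_⟩
        rw [show i = 2 * k + 1 by omega]
        exact h3 k (by omega) (by omega)
  refine ⟨?_, ?_, ?_, ?_, ?_⟩
  · -- (i) adjacent intersections
    intro i hi1 hi2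
    obtain ⟨ja, ka, hca, hsa⟩ := sig_char i hi1 hi2
    have hnext : ∃ jb kb,
        ((jb = m - 1 ∧ 1 ≤ kb ∧ kb ≤ m ∧ i + 1 = 2 * kb - 1) ∨
         (jb = m ∧ 1 ≤ kb ∧ kb ≤ 2 * m ∧ i + 1 = 2 * kb) ∨
         (jb = m + 1 ∧ m ≤ kb ∧ kb ≤ 2 * m - 1 ∧ i + 1 = 2 * kb + 1) ∨
         (jb = m - 1 ∧ kb = 1 ∧ i = 2 * (2 * m))) ∧
        σ (i + 1) = tau (2 * m) jb kb := by
      rcases Nat.lt_or_ge i (2 * (2 * m)) with h | h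
      · obtain ⟨jb, kb, hcb, hsb⟩ := sig_char (i + 1) (by omega) (by omega)
        exact ⟨jb, kb, by tauto, hsb⟩
      · have hi4 : i = 2 * (2 * m) := by omega
        refine ⟨m - 1, 1, Or.inr (Or.inr (Or.inr ⟨rfl, rfl, hi4⟩)), ?_⟩
        have h11 := h1 1 le_rfl (by omega)
        rw [hi4, show 2 * (2 * m) + 1 = 1 + 2 * (2 * m) by ring, hper 1]
        exact h11
    obtain ⟨jb, kb, hcb, hsb⟩ := hnext
    rw [hsa, hsb]
    have hja : ja ≤ 2 * m := by rcases hca with ⟨h, _⟩ | ⟨h, _⟩ | ⟨h, _⟩ <;> omega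
    have hjb : jb ≤ 2 * m := by
      rcases hcb with ⟨h, _⟩ | ⟨h, _⟩ | ⟨h, _⟩ | ⟨h, _⟩ <;> omega
    have hka1 : 1 ≤ ka := by
      rcases hca with ⟨_, h, _⟩ | ⟨_, h, _⟩ | ⟨_, h, _⟩ <;> omega
    have hka2 : ka ≤ 2 * m := by
      rcases hca with ⟨_, _, h, _⟩ | ⟨_, _, h, _⟩ | ⟨_, _, h, _⟩ <;> omega
    have hkb1 : 1 ≤ kb := by
      rcases hcb with ⟨_, h, _⟩ | ⟨_, h, _⟩ | ⟨_, h, _⟩ | ⟨_, h, _⟩ <;> omega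
    have hkb2 : kb ≤ 2 * m := by
      rcases hcb with ⟨_, _, h, _⟩ | ⟨_, _, h, _⟩ | ⟨_, _, h, _⟩ | ⟨_, h, _⟩ <;> omega
    obtain ⟨E, X, hrel, hEd, master, hXa, hXb, hXv⟩ :=
      pair_analysis m hm ja ka jb kb hka1 hka2 hkb1 hkb2 hja hjb
    split_ifs at hXv with hif <;> omega
  · -- (ii) antipodality
    intro i hi1 hi2
    obtain ⟨ja, ka, hca, hsa⟩ := sig_char i hi1 hi2
    have hja : ja ≤ 2 * m := by rcases hca with ⟨h, _⟩ | ⟨h, _⟩ | ⟨h, _⟩ <;> omega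
    rw [hsa, tau_alpha hd ja ka hja]
    rcases hca with ⟨hj, hk1, hk2, hieq⟩ | ⟨hj, hk1, hk2, hieq⟩ | ⟨hj, hk1, hk2, hieq⟩
    · rw [show 2 * m - ja = m + 1 by omega, show ka + ja = ka + m - 1 by omega,
        show i + 2 * m = 2 * (ka + m - 1) + 1 by omega,
        h3 (ka + m - 1) (by omega) (by omega)]
    · rw [show 2 * m - ja = m by omega, show ka + ja = ka + m by omega]
      rcases le_or_gt ka m with h | h
      · rw [show i + 2 * m = 2 * (ka + m) by omega, h2 (ka + m) (by omega) (by omega)]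
      · rw [show i + 2 * m = 2 * (ka - m) + 2 * (2 * m) by omega, hper,
          h2 (ka - m) (by omega) (by omega),
          show ka + m = (ka - m) + 2 * m by omega, tau_mod hd]
    · rw [show 2 * m - ja = m - 1 by omega,
        show i + 2 * m = (2 * (ka - m + 1) - 1) + 2 * (2 * m) by omega, hper,
        h1 (ka - m + 1) (by omega) (by omega),
        show ka + ja = (ka - m + 1) + 2 * m by omega, tau_mod hd]
  · -- (iii) distinctness
    intro i j hi1 hi2 hj1 hj2 heq
    obtain ⟨ja, ka, hca, hsa⟩ := sig_char i hi1 hi2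
    obtain ⟨jb, kb, hcb, hsb⟩ := sig_char j hj1 hj2
    have hja : ja ≤ 2 * m := by rcases hca with ⟨h, _⟩ | ⟨h, _⟩ | ⟨h, _⟩ <;> omega
    have hjb : jb ≤ 2 * m := by rcases hcb with ⟨h, _⟩ | ⟨h, _⟩ | ⟨h, _⟩ <;> omega
    have hka1 : 1 ≤ ka := by
      rcases hca with ⟨_, h, _⟩ | ⟨_, h, _⟩ | ⟨_, h, _⟩ <;> omega
    have hka2 : ka ≤ 2 * m := by
      rcases hca with ⟨_, _, h, _⟩ | ⟨_, _, h, _⟩ | ⟨_, _, h, _⟩ <;> omega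
    have hkb1 : 1 ≤ kb := by
      rcases hcb with ⟨_, h, _⟩ | ⟨_, h, _⟩ | ⟨_, h, _⟩ <;> omega
    have hkb2 : kb ≤ 2 * m := by
      rcases hcb with ⟨_, _, h, _⟩ | ⟨_, _, h, _⟩ | ⟨_, _, h, _⟩ <;> omega
    obtain ⟨E, X, hrel, hEd, master, hXa, hXb, hXv⟩ :=
      pair_analysis m hm ja ka jb kb hka1 hka2 hkb1 hkb2 hja hjb
    have hint : (tau (2 * m) ja ka ∩ tau (2 * m) jb kb).card = 2 * m := by
      rw [← hsa, ← hsb, heq, Finset.inter_self, hsb, tau_card hd]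
    split_ifs at hXv with hif <;> omega
  · -- (iv) facets
    intro F
    constructor
    · rintro ⟨i, hi1, hi2, rfl⟩
      obtain ⟨ja, ka, hca, hsa⟩ := sig_char i hi1 hi2
      constructor
      · rcases hca with ⟨hj, hk1, hk2, _⟩ | ⟨hj, hk1, hk2, _⟩ | ⟨hj, hk1, hk2, _⟩
        · exact Or.inl (Or.inr ⟨ka, hk1, hk2, fun x hx => by rwa [hsa, hj] at hx⟩)
        · exact Or.inl (Or.inl ⟨ka, hk1, hk2, fun x hx => by rwa [hsa, hj] at hx⟩)
        · exact Or.inr ⟨ka, hk1, hk2, fun x hx => by rwa [hsa, hj] at hx⟩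
      · intro G hG hFG
        have hgen : ∃ jg kg, G ⊆ tau (2 * m) jg kg := by
          rcases hG with (⟨k, hk1', hk2', hsub⟩ | ⟨k, hk1', hk2', hsub⟩) | ⟨k, hk1', hk2', hsub⟩
          · exact ⟨m, k, hsub⟩
          · exact ⟨m - 1, k, hsub⟩
          · exact ⟨m + 1, k, hsub⟩
        obtain ⟨jg, kg, hGsub⟩ := hgen
        have hc1 : (σ i).card = 2 * m := by rw [hsa]; exact tau_card hd _ _
        have hc2 : (tau (2 * m) jg kg).card = 2 * m := tau_card hd _ _
        have hFt : σ i = tau (2 * m) jg kg :=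
          Finset.eq_of_subset_of_card_le (hFG.trans hGsub) (by omega)
        refine Finset.Subset.antisymm hFG ?_
        rw [hFt]
        exact hGsub
    · rintro ⟨hmem, hmax⟩
      rcases hmem with (⟨k, hk1', hk2', hsub⟩ | ⟨k, hk1', hk2', hsub⟩) | ⟨k, hk1', hk2', hsub⟩
      · have hFeq := hmax (tau (2 * m) m k)
          (Or.inl (Or.inl ⟨k, hk1', hk2', Finset.Subset.refl _⟩)) hsub
        exact ⟨2 * k, by omega, by omega, by rw [hFeq, h2 k hk1' hk2']⟩
      · have hFeq := hmax (tau (2 * m) (m - 1) k)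
          (Or.inl (Or.inr ⟨k, hk1', hk2', Finset.Subset.refl _⟩)) hsub
        exact ⟨2 * k - 1, by omega, by omega, by rw [hFeq, h1 k hk1' hk2']⟩
      · have hFeq := hmax (tau (2 * m) (m + 1) k)
          (Or.inr ⟨k, hk1', hk2', Finset.Subset.refl _⟩) hsub
        exact ⟨2 * k + 1, by omega, by omega, by rw [hFeq, h3 k hk1' hk2']⟩
  · -- (v) ridge graph is a cycle
    intro i j hi1 hi2 hj1 hj2 hne hcard
    obtain ⟨ja, ka, hca, hsa⟩ := sig_char i hi1 hi2
    obtain ⟨jb, kb, hcb, hsb⟩ := sig_char j hj1 hj2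
    rw [hsa, hsb] at hcard
    have hja : ja ≤ 2 * m := by rcases hca with ⟨h, _⟩ | ⟨h, _⟩ | ⟨h, _⟩ <;> omega
    have hjb : jb ≤ 2 * m := by rcases hcb with ⟨h, _⟩ | ⟨h, _⟩ | ⟨h, _⟩ <;> omega
    have hka1 : 1 ≤ ka := by
      rcases hca with ⟨_, h, _⟩ | ⟨_, h, _⟩ | ⟨_, h, _⟩ <;> omega
    have hka2 : ka ≤ 2 * m := by
      rcases hca with ⟨_, _, h, _⟩ | ⟨_, _, h, _⟩ | ⟨_, _, h, _⟩ <;> omega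
    have hkb1 : 1 ≤ kb := by
      rcases hcb with ⟨_, h, _⟩ | ⟨_, h, _⟩ | ⟨_, h, _⟩ <;> omega
    have hkb2 : kb ≤ 2 * m := by
      rcases hcb with ⟨_, _, h, _⟩ | ⟨_, _, h, _⟩ | ⟨_, _, h, _⟩ <;> omega
    obtain ⟨E, X, hrel, hEd, master, hXa, hXb, hXv⟩ :=
      pair_analysis m hm ja ka jb kb hka1 hka2 hkb1 hkb2 hja hjb
    have hadj : (j = i + 1) ∨ (i = j + 1) ∨ (i = 1 ∧ j = 2 * (2 * m)) ∨
        (j = 1 ∧ i = 2 * (2 * m)) := by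
      split_ifs at hXv with hif <;> omega
    clear hXv hXa hXb master hrel hEd hca hcb hcard hne hsa hsb
    have hD : 0 < 2 * (2 * m) := by omega
    have g1 := mod_two_cases hD (show i ≤ 2 * (2 * (2 * m)) by omega)
    have g2 := mod_two_cases hD (show j ≤ 2 * (2 * (2 * m)) by omega)
    have g3 := mod_two_cases hD (show i + 1 ≤ 2 * (2 * (2 * m)) by omega)
    have g4 := mod_two_cases hD (show j + 1 ≤ 2 * (2 * (2 * m)) by omega)
    obtain ⟨a1, ha1⟩ : ∃ a, i % (2 * (2 * m)) = a := ⟨_, rfl⟩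
    obtain ⟨a2, ha2⟩ : ∃ a, j % (2 * (2 * m)) = a := ⟨_, rfl⟩
    obtain ⟨a3, ha3⟩ : ∃ a, (i + 1) % (2 * (2 * m)) = a := ⟨_, rfl⟩
    obtain ⟨a4, ha4⟩ : ∃ a, (j + 1) % (2 * (2 * m)) = a := ⟨_, rfl⟩
    rw [ha1] at g1
    rw [ha2] at g2
    rw [ha3] at g3
    rw [ha4] at g4
    rw [ha1, ha2, ha3, ha4]
    omega


end SpherePaper
end
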